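/- arXiv:1606.08417 — 8 statements merged into one kernel-verified Lean document; each statement's English description precedes it below -/
import Mathlib

section
/- Let d ≥ 1, let C¹_b(ℝ^d) be the Banach space of bounded continuously differentiable functions with bounded gradient and norm ‖u‖_{C¹} = sup|u| + sup|∇u|, and let I : C¹_b(ℝ^d) → C_b(ℝ^d) be Lipschitz with constant K₀, satisfy the global comparison property, and satisfy the locality assumption (with C¹ norms). Fix ε ∈ (0,1). Then there exist a constant Λ (depending only on d, K₀ and ε) and a family 𝒦 of linear functionals, each based at some point x ∈ ℝ^d and of the form L(u) = B·∇u(x) + C·u(x) + ∫_{ℝ^d∖{x}} ( u(y) − u(x) − 1_{B_1(x)}(y)·∇u(x)·(y−x) ) dμ(y) with B ∈ ℝ^d, C ∈ ℝ, μ a nonnegative Borel measure on ℝ^d∖{x}, |B| ≤ Λ, |C| ≤ Λ and ∫ min(1,|y−x|^{1+ε}) dμ(y) ≤ Λ (in particular, with no second-order diffusion part), such that: (i) for all u, v ∈ C^{1,ε}_b(ℝ^d) and all x ∈ ℝ^d there exists L ∈ 𝒦 based at x with I(u)(x) ≤ I(v)(x) + L(u − v); and consequently (ii) for every u ∈ C^{1,ε}_b(ℝ^d)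 and every x ∈ ℝ^d, I(u)(x) = inf over v ∈ C^{1,ε}_b(ℝ^d) of the sup over L ∈ 𝒦 based at x of ( I(v)(x) + L(u − v) ), the infimum being attained at v = u. -/
/-!
Fix `u, v ∈ C^{1,ε}_b`, a point `x`, and put `w = u - v`. The Hölder bound on `∇w` makes the
Lévy increment `w y - w x - 1_{B₁(x)}(y) ∇w(x)(y - x)` at most `S · min 1 ‖y - x‖^{1+ε}`, with an
optimal, finite `S`. The profile `g = (1 + ‖y - x‖^β)⁻¹`, `β = 1 + ε`, yields a `C¹_b` function
`φ = w x + ∇w(x)(y - x) g + (‖∇w(x)‖ + 2S)(1 - g)` touching `w` from above at `x`, with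
`‖φ‖_{C¹} ≤ 7 (|w x| + ‖∇w(x)‖ + S)`. Comparison with `v + φ` and the Lipschitz bound give
`I u x ≤ I v x + 7 K₀ (|w x| + ‖∇w(x)‖ + S)`, and for `Λ = 14 K₀ + 1` the right side is dominated by
one functional: drift along `∇w(x)`, zero-order coefficient `± Λ`, and a Dirac jump at a point
where increment over weight is at least `S / 2`. So `𝒦` can be all functionals obeying the bounds;
the infimum is attained at `v = u` because every functional vanishes on `0`.
-/

open MeasureTheory Metric Filter Set

noncomputable section

abbrev Euc (d : ℕ) := EuclideanSpace ℝ (Fin d)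

variable {d : ℕ}

def supNorm (u : Euc d → ℝ) : ℝ := ⨆ x, |u x|

def gradSup (u : Euc d → ℝ) : ℝ := ⨆ x, ‖fderiv ℝ u x‖

/-- the `C¹` norm : `sup|u| + sup|∇u|` -/
def C1Norm (u : Euc d → ℝ) : ℝ := supNorm u + gradSup u

/-- membership in `C¹_b(ℝ^d)` : bounded `C¹` functions with bounded gradient -/
def IsC1b (u : Euc d → ℝ) : Prop :=
  ContDiff ℝ 1 u ∧ ∃ M : ℝ, ∀ x, |u x| ≤ M ∧ ‖fderiv ℝ u x‖ ≤ M

/-- membership in `C^{1,γ}_b(ℝ^d)` : bounded `C¹` functions with bounded `γ`-Hölder gradient -/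
def IsC1Holder (γ : ℝ) (u : Euc d → ℝ) : Prop :=
  IsC1b u ∧ ∃ M : ℝ, ∀ x y, ‖fderiv ℝ u x - fderiv ℝ u y‖ ≤ M * ‖x - y‖ ^ γ

/-- membership in `C_b(ℝ^d)` -/
def IsCb (f : Euc d → ℝ) : Prop := Continuous f ∧ ∃ M : ℝ, ∀ x, |f x| ≤ M

def GCP (dom : (Euc d → ℝ) → Prop) (I : (Euc d → ℝ) → Euc d → ℝ) : Prop :=
  ∀ u v, dom u → dom v → (∀ y, u y ≤ v y) → ∀ x, u x = v x → I u x ≤ I v x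

def LipWith (K₀ : ℝ) (dom : (Euc d → ℝ) → Prop) (N : (Euc d → ℝ) → ℝ)
    (I : (Euc d → ℝ) → Euc d → ℝ) : Prop :=
  ∀ u v, dom u → dom v → ∀ x, |I u x - I v x| ≤ K₀ * N (fun y => u y - v y)

def localSup (r : ℝ) (u : Euc d → ℝ) : ℝ := ⨆ x ∈ closedBall (0 : Euc d) r, |u x|

def localGradSup (r : ℝ) (u : Euc d → ℝ) : ℝ :=
  ⨆ x ∈ closedBall (0 : Euc d) r, ‖fderiv ℝ u x‖

/-- the `C¹` norm restricted to the closed ball of radius `r` -/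
def localC1Norm (r : ℝ) (u : Euc d → ℝ) : ℝ := localSup r u + localGradSup r u

def Locality (dom : (Euc d → ℝ) → Prop) (locN : ℝ → (Euc d → ℝ) → ℝ)
    (I : (Euc d → ℝ) → Euc d → ℝ) : Prop :=
  ∃ C₀ : ℝ, ∃ ω : ℝ → ℝ, (∀ r > (0 : ℝ), 0 < ω r) ∧ Tendsto ω atTop (nhds 0) ∧
    ∃ r₀ : ℝ, ∀ r ≥ r₀, ∀ u v, dom u → dom v → ∀ x : Euc d, ‖x‖ ≤ r →
      |I u x - I v x| ≤ C₀ * locN (2 * r) (fun y => u y - v y)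
        + C₀ * ω r * supNorm (fun y => u y - v y)

/-- the data of a Lévy-type functional with no diffusion part, based at `base` -/
structure Levy1Data (d : ℕ) where
  base : Euc d
  B : Euc d
  C : ℝ
  μ : Measure (Euc d)

/-- action of a drift–jump Lévy-type functional:
`B·∇u(x) + C u(x) + ∫ (u(y) - u(x) - 1_{B₁(x)}(y) ∇u(x)·(y-x)) dμ(y)` -/
def Levy1Data.apply (L : Levy1Data d) (u : Euc d → ℝ) : ℝ :=
  fderiv ℝ u L.base L.B + L.C * u L.base
    + ∫ y, (u y - u L.base -
        Set.indicator (ball L.base 1) (fun z => fderiv ℝ u L.base (z - L.base)) y) ∂L.μ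

def Levy1Bounds (Λ ε : ℝ) (L : Levy1Data d) : Prop :=
  ‖L.B‖ ≤ Λ ∧ |L.C| ≤ Λ ∧ L.μ {L.base} = 0 ∧
    (∫⁻ y, ENNReal.ofReal (min 1 (‖y - L.base‖ ^ (1 + ε))) ∂L.μ) ≤ ENNReal.ofReal Λ

section Profile

variable {E : Type*} [NormedAddCommGroup E] [InnerProductSpace ℝ E] {β r : ℝ}

lemma le_one_add_rpow (hr : 0 ≤ r) (hβ : 1 ≤ β) : r ≤ 1 + r ^ β := by
  rcases le_total r 1 with h | h
  · linarith [Real.rpow_nonneg hr β]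
  · linarith [Real.self_le_rpow_of_one_le h hβ]

lemma rpow_sub_one_le_one_add_rpow (hr : 0 ≤ r) (hβ : 1 ≤ β) : r ^ (β - 1) ≤ 1 + r ^ β := by
  rcases le_total r 1 with h | h
  · linarith [Real.rpow_le_one hr h (sub_nonneg.2 hβ), Real.rpow_nonneg hr β]
  · linarith [Real.rpow_le_rpow_of_exponent_le h (sub_le_self β zero_le_one)]

lemma mul_rpow_sub_one_of_one_lt (hβ : 1 < β) : r * r ^ (β - 1) = r ^ β := by
  rcases eq_or_ne r 0 with rfl | h
  · rw [zero_mul, Real.zero_rpow (by linarith)]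
  · rw [mul_comm, ← Real.rpow_add_one h]; ring_nf

lemma norm_smul_innerSL_norm_rpow (hβ : 1 < β) (z : E) :
    ‖(β * ‖z‖ ^ (β - 2)) • innerSL ℝ z‖ = β * ‖z‖ ^ (β - 1) := by
  rw [norm_smul, innerSL_apply_norm, Real.norm_eq_abs, abs_mul, abs_of_pos (by linarith),
    abs_of_nonneg (by positivity), mul_assoc]
  rcases eq_or_ne ‖z‖ 0 with h | h
  · rw [h, mul_zero, Real.zero_rpow (by linarith)]
  · rw [← Real.rpow_add_one h]; ring_nf

lemma exists_hasFDerivAt_inv_one_add_norm_sub_rpow (hβ : 1 < β) (x y : E) :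
    ∃ g' : StrongDual ℝ E, HasFDerivAt (fun z => (1 + ‖z - x‖ ^ β)⁻¹) g' y ∧
      ‖g'‖ ≤ β ∧ ‖y - x‖ * ‖g'‖ ≤ β := by
  have hN : HasFDerivAt (fun z => 1 + ‖z - x‖ ^ β)
      ((β * ‖y - x‖ ^ (β - 2)) • innerSL ℝ (y - x)) y := by
    have := (hasFDerivAt_norm_rpow (y - x) hβ).comp y ((hasFDerivAt_id y).sub_const x)
    rw [ContinuousLinearMap.comp_id] at this
    exact this.const_add 1
  refine ⟨_, (hasDerivAt_inv (by positivity)).comp_hasFDerivAt y hN, ?_⟩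
  rw [norm_smul, norm_smul_innerSL_norm_rpow hβ, norm_neg, norm_inv, Real.norm_eq_abs,
    abs_of_pos (by positivity)]
  set r := ‖y - x‖
  have hr : 0 ≤ r := norm_nonneg _
  have hN1 : 1 ≤ 1 + r ^ β := by linarith [Real.rpow_nonneg hr β]
  have hsq : 1 + r ^ β ≤ (1 + r ^ β) ^ 2 := by nlinarith
  have h1 : r ^ (β - 1) ≤ (1 + r ^ β) ^ 2 := (rpow_sub_one_le_one_add_rpow hr hβ.le).trans hsq
  have h2 : r * r ^ (β - 1) ≤ (1 + r ^ β) ^ 2 := by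
    rw [mul_rpow_sub_one_of_one_lt hβ]; linarith
  constructor
  · rw [inv_mul_le_iff₀ (by positivity)]
    nlinarith
  · rw [← mul_assoc, mul_comm r, mul_assoc, inv_mul_le_iff₀ (by positivity)]
    nlinarith

end Profile

lemma min_one_le_two_mul_one_sub_inv {t : ℝ} (ht : 0 ≤ t) : min 1 t ≤ 2 * (1 - (1 + t)⁻¹) := by
  have h : 1 - (1 + t)⁻¹ = t / (1 + t) := by field_simp; ring
  rw [h, mul_div_assoc', le_div_iff₀ (by linarith)]
  rcases le_total t 1 with h1 | h1
  · rw [min_eq_right h1]; nlinarith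
  · rw [min_eq_left h1]; linarith

section Majorant

variable {E : Type*} [NormedAddCommGroup E] [InnerProductSpace ℝ E] {β : ℝ}

def touchingMajorant (β : ℝ) (x : E) (p : StrongDual ℝ E) (a S : ℝ) (y : E) : ℝ :=
  a + p (y - x) * (1 + ‖y - x‖ ^ β)⁻¹ + (‖p‖ + 2 * S) * (1 - (1 + ‖y - x‖ ^ β)⁻¹)

variable (x : E) (p : StrongDual ℝ E) (a S : ℝ)

lemma touchingMajorant_self (hβ : β ≠ 0) : touchingMajorant β x p a S x = a := by
  simp [touchingMajorant, Real.zero_rpow hβ]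

lemma abs_apply_mul_inv_one_add_rpow_le (hβ : 1 ≤ β) (y : E) :
    |p (y - x) * (1 + ‖y - x‖ ^ β)⁻¹| ≤ ‖p‖ := by
  have hr := norm_nonneg (y - x)
  have hpos : 0 < 1 + ‖y - x‖ ^ β := by positivity
  rw [abs_mul, abs_of_pos (inv_pos.2 hpos), ← div_eq_mul_inv, div_le_iff₀ hpos]
  calc |p (y - x)| ≤ ‖p‖ * ‖y - x‖ := p.le_opNorm (y - x)
    _ ≤ ‖p‖ * (1 + ‖y - x‖ ^ β) := by gcongr; exact le_one_add_rpow hr hβ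

lemma indicator_ball_apply_sub_le (hβ : 1 ≤ β) (y : E) :
    indicator (ball x 1) (fun z => p (z - x)) y
      ≤ p (y - x) * (1 + ‖y - x‖ ^ β)⁻¹ + ‖p‖ * (1 - (1 + ‖y - x‖ ^ β)⁻¹) := by
  have hr := norm_nonneg (y - x)
  have hN : 0 ≤ ‖y - x‖ ^ β := by positivity
  have hp : |p (y - x)| ≤ ‖p‖ * ‖y - x‖ := p.le_opNorm (y - x)
  have h : p (y - x) * (1 + ‖y - x‖ ^ β)⁻¹ + ‖p‖ * (1 - (1 + ‖y - x‖ ^ β)⁻¹)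
      = (p (y - x) + ‖p‖ * ‖y - x‖ ^ β) / (1 + ‖y - x‖ ^ β) := by field_simp; ring
  rw [h, le_div_iff₀ (by linarith)]
  by_cases hy : y ∈ ball x 1
  · rw [indicator_of_mem hy]
    have hy' : ‖y - x‖ < 1 := by rwa [mem_ball, dist_eq_norm] at hy
    have : p (y - x) ≤ ‖p‖ := by nlinarith [le_abs_self (p (y - x)), norm_nonneg p]
    nlinarith
  · rw [indicator_of_notMem hy, zero_mul]
    have hy' : 1 ≤ ‖y - x‖ := by simpa [mem_ball, dist_eq_norm] using hy
    have := Real.self_le_rpow_of_one_le hy' hβ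
    nlinarith [neg_abs_le (p (y - x)), norm_nonneg p]

variable {S}

lemma le_touchingMajorant (hβ : 1 ≤ β) (hS : 0 ≤ S) (y : E) :
    a + indicator (ball x 1) (fun z => p (z - x)) y + S * min 1 (‖y - x‖ ^ β)
      ≤ touchingMajorant β x p a S y := by
  have h1 := indicator_ball_apply_sub_le x p hβ y
  have h2 := mul_le_mul_of_nonneg_left
    (min_one_le_two_mul_one_sub_inv (by positivity : 0 ≤ ‖y - x‖ ^ β)) hS
  rw [touchingMajorant]
  linarith

lemma abs_touchingMajorant_le (hβ : 1 ≤ β) (hS : 0 ≤ S) (y : E) :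
    |touchingMajorant β x p a S y| ≤ |a| + ‖p‖ + (‖p‖ + 2 * S) := by
  have hg : 0 < (1 + ‖y - x‖ ^ β)⁻¹ := by positivity
  have hg1 : (1 + ‖y - x‖ ^ β)⁻¹ ≤ 1 := inv_le_one_of_one_le₀ (by simp; positivity)
  have h1 : |(‖p‖ + 2 * S) * (1 - (1 + ‖y - x‖ ^ β)⁻¹)| ≤ ‖p‖ + 2 * S := by
    rw [abs_of_nonneg (mul_nonneg (by positivity) (by linarith))]
    nlinarith [norm_nonneg p]
  calc _ ≤ |a| + |p (y - x) * (1 + ‖y - x‖ ^ β)⁻¹|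
        + |(‖p‖ + 2 * S) * (1 - (1 + ‖y - x‖ ^ β)⁻¹)| := abs_add_three _ _ _
    _ ≤ _ := by linarith [abs_apply_mul_inv_one_add_rpow_le x p hβ y]

lemma contDiff_touchingMajorant (hβ : 1 < β) :
    ContDiff ℝ 1 (touchingMajorant β x p a S) := by
  have hg : ContDiff ℝ 1 fun y : E => (1 + ‖y - x‖ ^ β)⁻¹ :=
    (contDiff_const.add ((contDiff_id.sub contDiff_const).norm_rpow hβ)).inv
      fun y => by positivity
  have hlin : ContDiff ℝ 1 fun y : E => p (y - x) :=
    p.contDiff.comp (contDiff_id.sub contDiff_const)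
  exact (contDiff_const.add (hlin.mul hg)).add (contDiff_const.mul (contDiff_const.sub hg))

lemma norm_fderiv_touchingMajorant_le (hβ : 1 < β) (hS : 0 ≤ S) (y : E) :
    ‖fderiv ℝ (touchingMajorant β x p a S) y‖ ≤ (1 + β) * ‖p‖ + β * (‖p‖ + 2 * S) := by
  set c := ‖p‖ + 2 * S
  set g := (1 + ‖y - x‖ ^ β)⁻¹
  obtain ⟨g', hg', hg'1, hg'2⟩ := exists_hasFDerivAt_inv_one_add_norm_sub_rpow hβ x y
  have hlin : HasFDerivAt (fun z => p (z - x)) p y := by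
    have := p.hasFDerivAt.comp y ((hasFDerivAt_id y).sub_const x)
    rwa [ContinuousLinearMap.comp_id] at this
  rw [HasFDerivAt.fderiv (f := touchingMajorant β x p a S)
    (((hlin.mul hg').const_add a).add ((hg'.const_sub 1).const_mul c))]
  have hg0 : 0 < g := by positivity
  have hg1 : g ≤ 1 := inv_le_one_of_one_le₀ (by simp; positivity)
  have e1 : |p (y - x)| * ‖g'‖ ≤ ‖p‖ * β :=
    calc |p (y - x)| * ‖g'‖ ≤ ‖p‖ * ‖y - x‖ * ‖g'‖ := by gcongr; exact p.le_opNorm (y - x)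
      _ ≤ ‖p‖ * β := by rw [mul_assoc]; gcongr
  have e2 : g * ‖p‖ ≤ 1 * ‖p‖ := by gcongr
  have e3 : c * ‖g'‖ ≤ c * β := by gcongr
  calc _ ≤ |p (y - x)| * ‖g'‖ + g * ‖p‖ + c * ‖g'‖ := by
        refine (norm_add_le _ _).trans (add_le_add ((norm_add_le _ _).trans ?_) ?_)
        · rw [norm_smul, norm_smul, Real.norm_eq_abs, Real.norm_eq_abs, abs_of_pos hg0]
        · rw [norm_smul, norm_neg, Real.norm_eq_abs, abs_of_nonneg (by positivity)]
    _ ≤ _ := by linarith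

end Majorant

lemma C1Norm_le_of_forall {u : Euc d → ℝ} {A B : ℝ} (h0 : ∀ y, |u y| ≤ A)
    (h1 : ∀ y, ‖fderiv ℝ u y‖ ≤ B) : C1Norm u ≤ A + B :=
  add_le_add (ciSup_le h0) (ciSup_le h1)

lemma isC1b_of_forall {u : Euc d → ℝ} {A B : ℝ} (hu : ContDiff ℝ 1 u) (h0 : ∀ y, |u y| ≤ A)
    (h1 : ∀ y, ‖fderiv ℝ u y‖ ≤ B) : IsC1b u :=
  ⟨hu, max A B, fun y => ⟨(h0 y).trans (le_max_left _ _), (h1 y).trans (le_max_right _ _)⟩⟩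

lemma isC1b_touchingMajorant {β : ℝ} (hβ : 1 < β) (x : Euc d) (p : StrongDual ℝ (Euc d))
    (a : ℝ) {S : ℝ} (hS : 0 ≤ S) : IsC1b (touchingMajorant β x p a S) :=
  isC1b_of_forall (contDiff_touchingMajorant x p a hβ) (abs_touchingMajorant_le x p a hβ.le hS)
    (norm_fderiv_touchingMajorant_le x p a hβ hS)

lemma C1Norm_touchingMajorant_le {β : ℝ} (hβ : 1 < β) (hβ2 : β ≤ 2) (x : Euc d)
    (p : StrongDual ℝ (Euc d)) (a : ℝ) {S : ℝ} (hS : 0 ≤ S) :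
    C1Norm (touchingMajorant β x p a S) ≤ 7 * (|a| + ‖p‖ + S) := by
  have := C1Norm_le_of_forall (abs_touchingMajorant_le x p a hβ.le hS)
    (norm_fderiv_touchingMajorant_le x p a hβ hS)
  nlinarith [abs_nonneg a, norm_nonneg p]

lemma abs_sub_sub_fderiv_le_of_holder {E : Type*} [NormedAddCommGroup E] [NormedSpace ℝ E]
    {w : E → ℝ} (hw : Differentiable ℝ w) {ε M : ℝ} (hε : 0 ≤ ε) (hM : 0 ≤ M)
    (hH : ∀ y z, ‖fderiv ℝ w y - fderiv ℝ w z‖ ≤ M * ‖y - z‖ ^ ε) (x y : E) :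
    |w y - w x - fderiv ℝ w x (y - x)| ≤ M * ‖y - x‖ ^ (1 + ε) := by
  set g : E → ℝ := fun z => w z - fderiv ℝ w x (z - x)
  have hg : ∀ z, HasFDerivAt g (fderiv ℝ w z - fderiv ℝ w x) z := fun z => by
    have := (fderiv ℝ w x).hasFDerivAt.comp z ((hasFDerivAt_id z).sub_const x)
    rw [ContinuousLinearMap.comp_id] at this
    exact (hw z).hasFDerivAt.sub this
  have hbound : ∀ z ∈ closedBall x ‖y - x‖, ‖fderiv ℝ g z‖ ≤ M * ‖y - x‖ ^ ε := fun z hz => by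
    rw [(hg z).fderiv]
    rw [mem_closedBall, dist_eq_norm] at hz
    exact (hH z x).trans (by gcongr)
  have hmvt := (convex_closedBall x ‖y - x‖).norm_image_sub_le_of_norm_fderiv_le
    (fun z _ => (hg z).differentiableAt) hbound (mem_closedBall_self (norm_nonneg _))
    (by rw [mem_closedBall, dist_eq_norm])
  have hgxy : g y - g x = w y - w x - fderiv ℝ w x (y - x) := by simp [g]; ring
  rw [← Real.norm_eq_abs, ← hgxy, Real.rpow_add' (norm_nonneg _) (by linarith), Real.rpow_one]
  linarith

lemma exists_nonneg_bound_le_two_mul_ratio {α : Type*} {f g : α → ℝ} {M : ℝ} (a : α)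
    (ha : f a = 0) (hg : ∀ y, g y = 0 → f y ≤ 0) (hg0 : ∀ y, 0 ≤ g y) (hM : ∀ y, f y ≤ M * g y) :
    ∃ S, 0 ≤ S ∧ (∀ y, f y ≤ S * g y) ∧ ∃ y₀, S ≤ 2 * (f y₀ / g y₀) := by
  have hbdd : BddAbove (range fun y => f y / g y) := by
    refine ⟨max M 0, forall_mem_range.2 fun y => ?_⟩
    rcases (hg0 y).eq_or_lt' with h | h
    · simp [h]
    · exact (div_le_iff₀ h).2 (hM y) |>.trans (le_max_left _ _)
  have hS0 : 0 ≤ ⨆ y, f y / g y := by simpa [ha] using le_ciSup hbdd a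
  refine ⟨⨆ y, f y / g y, hS0, fun y => ?_, ?_⟩
  · rcases (hg0 y).eq_or_lt' with h | h
    · simpa [h] using hg y h
    · exact (div_le_iff₀ h).1 (le_ciSup hbdd y)
  · rcases hS0.eq_or_lt with h | h
    · exact ⟨a, by simp [← h, ha]⟩
    · have : Nonempty α := ⟨a⟩
      obtain ⟨y₀, hy₀⟩ := exists_lt_of_lt_ciSup (half_lt_self h)
      exact ⟨y₀, by linarith⟩

section Increment

variable {E : Type*} [NormedAddCommGroup E] [NormedSpace ℝ E] {ε : ℝ}

def levyIncrement (u : E → ℝ) (x y : E) : ℝ :=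
  u y - u x - indicator (ball x 1) (fun z => fderiv ℝ u x (z - x)) y

lemma levyIncrement_self (u : E → ℝ) (x : E) : levyIncrement u x x = 0 := by
  simp [levyIncrement, mem_ball_self one_pos]

lemma levyIncrement_le_of_isC1Holder (hε : 0 < ε) {w : Euc d → ℝ} (hw : IsC1Holder ε w)
    (x : Euc d) : ∃ M, ∀ y, levyIncrement w x y ≤ M * min 1 (‖y - x‖ ^ (1 + ε)) := by
  obtain ⟨⟨hw1, M₀, hM₀⟩, M₁, hM₁⟩ := hw
  have hM₁' : ∀ y z, ‖fderiv ℝ w y - fderiv ℝ w z‖ ≤ max M₁ 0 * ‖y - z‖ ^ ε :=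
    fun y z => (hM₁ y z).trans (by gcongr; exact le_max_left _ _)
  have hM₀0 : 0 ≤ M₀ := (abs_nonneg _).trans (hM₀ x).1
  refine ⟨max M₁ 0 + 2 * M₀, fun y => ?_⟩
  by_cases hy : y ∈ ball x 1
  · have hr : ‖y - x‖ ^ (1 + ε) ≤ 1 := Real.rpow_le_one (norm_nonneg _)
      (by rw [mem_ball, dist_eq_norm] at hy; exact hy.le) (by linarith)
    have := abs_sub_sub_fderiv_le_of_holder (hw1.differentiable one_ne_zero) hε.le
      (le_max_right M₁ 0) hM₁' x y
    rw [levyIncrement, indicator_of_mem hy, min_eq_right hr]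
    nlinarith [le_abs_self (w y - w x - fderiv ℝ w x (y - x)),
      Real.rpow_nonneg (norm_nonneg (y - x)) (1 + ε)]
  · have hr : 1 ≤ ‖y - x‖ ^ (1 + ε) := Real.one_le_rpow
      (by simpa [mem_ball, dist_eq_norm] using hy) (by linarith)
    rw [levyIncrement, indicator_of_notMem hy, min_eq_left hr]
    linarith [abs_le.1 (hM₀ x).1, abs_le.1 (hM₀ y).1, le_max_right M₁ 0]

lemma exists_levyIncrement_bound (hε : 0 < ε) {w : Euc d → ℝ} (hw : IsC1Holder ε w)
    (x : Euc d) :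
    ∃ S, 0 ≤ S ∧ (∀ y, levyIncrement w x y ≤ S * min 1 (‖y - x‖ ^ (1 + ε))) ∧
      ∃ y₀, S ≤ 2 * (levyIncrement w x y₀ / min 1 (‖y₀ - x‖ ^ (1 + ε))) := by
  obtain ⟨M, hM⟩ := levyIncrement_le_of_isC1Holder hε hw x
  refine exists_nonneg_bound_le_two_mul_ratio x (levyIncrement_self w x) (fun y hy => ?_)
    (fun y => by positivity) hM
  have : y = x := by
    rcases min_eq_iff.1 hy with h | h
    · exact absurd h.1 one_ne_zero
    · simpa [sub_eq_zero, Real.rpow_eq_zero (norm_nonneg _) (by linarith : 1 + ε ≠ 0)] using h.1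
  simp [this, levyIncrement_self]

end Increment

lemma exists_norm_le_apply_eq_mul_norm {E : Type*} [NormedAddCommGroup E] [InnerProductSpace ℝ E]
    [CompleteSpace E] (p : StrongDual ℝ E) {Λ : ℝ} (hΛ : 0 ≤ Λ) :
    ∃ B : E, ‖B‖ ≤ Λ ∧ p B = Λ * ‖p‖ := by
  rcases eq_or_ne p 0 with rfl | hp
  · exact ⟨0, by simpa using hΛ, by simp⟩
  set v := (InnerProductSpace.toDual ℝ E).symm p
  have hv : ‖v‖ = ‖p‖ := LinearIsometryEquiv.norm_map _ _
  have hpv : p v = ‖p‖ ^ 2 := by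
    rw [← InnerProductSpace.toDual_symm_apply, real_inner_self_eq_norm_sq, hv]
  have hp0 : 0 < ‖p‖ := norm_pos_iff.2 hp
  refine ⟨(Λ / ‖p‖) • v, ?_, ?_⟩
  · rw [norm_smul, hv, Real.norm_eq_abs, abs_of_nonneg (by positivity), div_mul_cancel₀ _ hp0.ne']
  · rw [map_smul, hpv, smul_eq_mul]
    field_simp

lemma integral_le_mul_of_le_mul {α : Type*} [MeasurableSpace α] {μ : Measure α} {f ρ : α → ℝ}
    {S Λ : ℝ} (hρ : Measurable ρ) (hρ0 : ∀ y, 0 ≤ ρ y)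
    (hρΛ : ∫⁻ y, ENNReal.ofReal (ρ y) ∂μ ≤ ENNReal.ofReal Λ) (hS : 0 ≤ S) (hΛ : 0 ≤ Λ)
    (hf : ∀ y, f y ≤ S * ρ y) : ∫ y, f y ∂μ ≤ S * Λ := by
  have hρi : Integrable ρ μ := ⟨hρ.aestronglyMeasurable,
    (hasFiniteIntegral_iff_ofReal (ae_of_all _ hρ0)).2 (hρΛ.trans_lt ENNReal.ofReal_lt_top)⟩
  have hρint : ∫ y, ρ y ∂μ ≤ Λ := by
    rw [integral_eq_lintegral_of_nonneg_ae (ae_of_all _ hρ0) hρ.aestronglyMeasurable]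
    exact ENNReal.toReal_le_of_le_ofReal hΛ hρΛ
  by_cases hfi : Integrable f μ
  · calc ∫ y, f y ∂μ ≤ ∫ y, S * ρ y ∂μ := integral_mono hfi (hρi.const_mul S) hf
      _ = S * ∫ y, ρ y ∂μ := integral_const_mul S ρ
      _ ≤ S * Λ := by gcongr
  · rw [integral_undef hfi]
    positivity

section Functional

variable {Λ ε : ℝ}

lemma Levy1Data.apply_eq (L : Levy1Data d) (u : Euc d → ℝ) :
    L.apply u = fderiv ℝ u L.base L.B + L.C * u L.base
      + ∫ y, levyIncrement u L.base y ∂L.μ := rfl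

lemma Levy1Data.apply_sub_self (L : Levy1Data d) (u : Euc d → ℝ) :
    L.apply (fun y => u y - u y) = 0 := by
  simp [Levy1Data.apply]

lemma levy1Bounds_zero (hΛ : 0 ≤ Λ) (x : Euc d) : Levy1Bounds Λ ε ⟨x, 0, 0, 0⟩ := by
  simp [Levy1Bounds, hΛ]

lemma Levy1Data.apply_le {L : Levy1Data d} (hL : Levy1Bounds Λ ε L) {w : Euc d → ℝ} {S : ℝ}
    (hS : 0 ≤ S) (hw : ∀ y, levyIncrement w L.base y ≤ S * min 1 (‖y - L.base‖ ^ (1 + ε))) :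
    L.apply w ≤ Λ * (‖fderiv ℝ w L.base‖ + |w L.base| + S) := by
  obtain ⟨hB, hC, -, hμ⟩ := hL
  have hΛ : 0 ≤ Λ := (norm_nonneg _).trans hB
  have h1 : fderiv ℝ w L.base L.B ≤ ‖fderiv ℝ w L.base‖ * Λ :=
    (le_abs_self _).trans (((fderiv ℝ w L.base).le_opNorm L.B).trans (by gcongr))
  have h2 : L.C * w L.base ≤ Λ * |w L.base| :=
    (le_abs_self _).trans ((abs_mul _ _).trans_le (by gcongr))
  have h3 := integral_le_mul_of_le_mul (by fun_prop) (fun y => by positivity) hμ hS hΛ hw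
  rw [Levy1Data.apply_eq]
  linarith

lemma bddAbove_add_apply (hε : 0 < ε) {w : Euc d → ℝ} (hw : IsC1Holder ε w) (x : Euc d)
    (c : ℝ) : BddAbove {s | ∃ L ∈ {L : Levy1Data d | Levy1Bounds Λ ε L}, L.base = x ∧
      s = c + L.apply w} := by
  obtain ⟨S, hS0, hwS, -⟩ := exists_levyIncrement_bound hε hw x
  refine ⟨c + Λ * (‖fderiv ℝ w x‖ + |w x| + S), ?_⟩
  rintro _ ⟨L, hL, rfl, rfl⟩
  linarith [Levy1Data.apply_le hL hS0 hwS]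

/-- When `y₀ = x` the weight vanishes and `Λ / 0 = 0` removes the Dirac mass, so no case
distinction is needed. -/
lemma exists_levy1Bounds_apply_eq (hΛ : 0 ≤ Λ) (hε : 1 + ε ≠ 0) (w : Euc d → ℝ) (x y₀ : Euc d) :
    ∃ L : Levy1Data d, Levy1Bounds Λ ε L ∧ L.base = x ∧ L.apply w
      = Λ * (‖fderiv ℝ w x‖ + |w x| + levyIncrement w x y₀ / min 1 (‖y₀ - x‖ ^ (1 + ε))) := by
  set ρ := min 1 (‖y₀ - x‖ ^ (1 + ε))
  obtain ⟨B, hB, hpB⟩ := exists_norm_le_apply_eq_mul_norm (fderiv ℝ w x) hΛ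
  refine ⟨⟨x, B, Λ * SignType.sign (w x), ENNReal.ofReal (Λ / ρ) • Measure.dirac y₀⟩,
    ⟨hB, ?_, ?_, ?_⟩, rfl, ?_⟩
  · rcases lt_trichotomy (w x) 0 with h | h | h <;> simp [h, abs_of_nonneg hΛ, hΛ]
  · rcases eq_or_ne y₀ x with rfl | h
    · simp [ρ, Real.zero_rpow hε]
    · simp [h]
  · rw [lintegral_smul_measure, lintegral_dirac, smul_eq_mul, ← ENNReal.ofReal_mul (by positivity)]
    refine ENNReal.ofReal_le_ofReal ?_
    rcases eq_or_ne ρ 0 with h | h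
    · simp [h, hΛ]
    · rw [div_mul_cancel₀ _ h]
  · rw [Levy1Data.apply_eq, integral_smul_measure, integral_dirac,
      ENNReal.toReal_ofReal (by positivity), smul_eq_mul]
    simp only [hpB, mul_assoc, sign_mul_self]
    ring

end Functional

lemma eq_csInf_csSup_of_le {V : Type*} {P : V → Prop} {A : V → Set ℝ} {c : ℝ} {u : V}
    (hu : P u) (hAu : sSup (A u) = c) (hA : ∀ v, P v → BddAbove (A v))
    (hc : ∀ v, P v → ∃ s ∈ A v, c ≤ s) : c = sInf {r | ∃ v, P v ∧ r = sSup (A v)} := by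
  refine (IsLeast.csInf_eq (s := {r | ∃ v, P v ∧ r = sSup (A v)})
    ⟨⟨u, hu, hAu.symm⟩, ?_⟩).symm
  rintro _ ⟨v, hv, rfl⟩
  obtain ⟨s, hs, hcs⟩ := hc v hv
  exact hcs.trans (le_csSup (hA v hv) hs)

section Operator

lemma IsC1b.add {u v : Euc d → ℝ} (hu : IsC1b u) (hv : IsC1b v) : IsC1b fun y => u y + v y := by
  obtain ⟨hu1, Mu, hMu⟩ := hu
  obtain ⟨hv1, Mv, hMv⟩ := hv
  refine ⟨hu1.add hv1, Mu + Mv, fun y => ⟨?_, ?_⟩⟩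
  · exact (abs_add_le _ _).trans (add_le_add (hMu y).1 (hMv y).1)
  · rw [fderiv_fun_add (hu1.differentiable one_ne_zero y) (hv1.differentiable one_ne_zero y)]
    exact (norm_add_le _ _).trans (add_le_add (hMu y).2 (hMv y).2)

lemma IsC1Holder.sub {ε : ℝ} {u v : Euc d → ℝ} (hu : IsC1Holder ε u) (hv : IsC1Holder ε v) :
    IsC1Holder ε fun y => u y - v y := by
  obtain ⟨⟨hu1, Mu, hMu⟩, Hu, hHu⟩ := hu
  obtain ⟨⟨hv1, Mv, hMv⟩, Hv, hHv⟩ := hv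
  have hfd : ∀ y, fderiv ℝ (fun y => u y - v y) y = fderiv ℝ u y - fderiv ℝ v y := fun y =>
    fderiv_fun_sub (hu1.differentiable one_ne_zero y) (hv1.differentiable one_ne_zero y)
  refine ⟨⟨hu1.sub hv1, Mu + Mv, fun y => ⟨?_, ?_⟩⟩, Hu + Hv, fun y z => ?_⟩
  · exact (abs_sub _ _).trans (add_le_add (hMu y).1 (hMv y).1)
  · rw [hfd]
    exact (norm_sub_le _ _).trans (add_le_add (hMu y).2 (hMv y).2)
  · rw [hfd, hfd, sub_sub_sub_comm, add_mul]
    exact (norm_sub_le _ _).trans (add_le_add (hHu y z) (hHv y z))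

variable {I : (Euc d → ℝ) → Euc d → ℝ} {K₀ : ℝ}

lemma le_add_mul_C1Norm (hLip : LipWith K₀ IsC1b C1Norm I) (hGCP : GCP IsC1b I)
    {u v φ : Euc d → ℝ} (hu : IsC1b u) (hv : IsC1b v) (hφ : IsC1b φ)
    (hle : ∀ y, u y - v y ≤ φ y) {x : Euc d} (hx : φ x = u x - v x) :
    I u x ≤ I v x + K₀ * C1Norm φ := by
  have h1 : I u x ≤ I (fun y => v y + φ y) x :=
    hGCP _ _ hu (hv.add hφ) (fun y => by linarith [hle y]) x (by linarith)
  have h2 := hLip (fun y => v y + φ y) v (hv.add hφ) hv x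
  simp only [add_sub_cancel_left] at h2
  linarith [le_abs_self (I (fun y => v y + φ y) x - I v x)]

lemma exists_levy1Bounds_le_add_apply (hK₀ : 0 ≤ K₀) {ε : ℝ} (hε : ε ∈ Ioo (0 : ℝ) 1)
    (hLip : LipWith K₀ IsC1b C1Norm I) (hGCP : GCP IsC1b I) {u v : Euc d → ℝ}
    (hu : IsC1Holder ε u) (hv : IsC1Holder ε v) (x : Euc d) :
    ∃ L : Levy1Data d, Levy1Bounds (14 * K₀ + 1) ε L ∧ L.base = x ∧
      I u x ≤ I v x + L.apply (fun y => u y - v y) := by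
  obtain ⟨hε0, hε1⟩ := hε
  set w : Euc d → ℝ := fun y => u y - v y
  obtain ⟨S, hS0, hwS, y₀, hy₀⟩ := exists_levyIncrement_bound hε0 (hu.sub hv) x
  set φ := touchingMajorant (1 + ε) x (fderiv ℝ w x) (w x) S
  have hwφ : ∀ y, w y ≤ φ y := fun y => by
    have := le_touchingMajorant (β := 1 + ε) x (fderiv ℝ w x) (w x) (by linarith) hS0 y
    have hw : w y = w x + indicator (ball x 1) (fun z => fderiv ℝ w x (z - x)) y
        + levyIncrement w x y := by rw [levyIncrement]; ring
    linarith [hwS y]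
  have hI := le_add_mul_C1Norm hLip hGCP hu.1 hv.1
    (isC1b_touchingMajorant (β := 1 + ε) (by linarith) x _ _ hS0) hwφ
    (touchingMajorant_self x _ _ _ (by linarith))
  have hφ := C1Norm_touchingMajorant_le (β := 1 + ε) (by linarith) (by linarith) x
    (fderiv ℝ w x) (w x) hS0
  obtain ⟨L, hL, rfl, hLw⟩ :=
    exists_levy1Bounds_apply_eq (Λ := 14 * K₀ + 1) (ε := ε) (by positivity) (by linarith) w x y₀
  refine ⟨L, hL, rfl, ?_⟩
  rw [hLw]
  nlinarith [abs_nonneg (w L.base), norm_nonneg (fderiv ℝ w L.base)]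

end Operator

theorem minmax_C1b_general (d : ℕ) (K₀ : ℝ) (hK₀ : 0 ≤ K₀)
    (ε : ℝ) (hε : ε ∈ Set.Ioo (0 : ℝ) 1) :
    ∃ Λ : ℝ, 0 < Λ ∧
      ∀ I : (Euc d → ℝ) → Euc d → ℝ,
        (∀ u, IsC1b u → IsCb (I u)) →
        LipWith K₀ IsC1b C1Norm I →
        GCP IsC1b I →
        Locality IsC1b localC1Norm I →
        ∃ 𝒦 : Set (Levy1Data d),
          (∀ L ∈ 𝒦, Levy1Bounds Λ ε L) ∧
          (∀ u v, IsC1Holder ε u → IsC1Holder ε v → ∀ x : Euc d,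
            ∃ L ∈ 𝒦, L.base = x ∧ I u x ≤ I v x + L.apply (fun y => u y - v y)) ∧
          (∀ u, IsC1Holder ε u → ∀ x : Euc d,
            I u x = sInf {r : ℝ | ∃ v, IsC1Holder ε v ∧
                r = sSup {s : ℝ | ∃ L ∈ 𝒦, L.base = x ∧
                      s = I v x + L.apply (fun y => u y - v y)}} ∧
            sSup {s : ℝ | ∃ L ∈ 𝒦, L.base = x ∧
                s = I u x + L.apply (fun y => u y - u y)} = I u x) := by
  refine ⟨14 * K₀ + 1, by positivity, fun I _ hLip hGCP _ => ?_⟩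
  set 𝒦 := {L : Levy1Data d | Levy1Bounds (14 * K₀ + 1) ε L}
  have key : ∀ u v, IsC1Holder ε u → IsC1Holder ε v → ∀ x : Euc d,
      ∃ L ∈ 𝒦, L.base = x ∧ I u x ≤ I v x + L.apply (fun y => u y - v y) :=
    fun u v hu hv x => exists_levy1Bounds_le_add_apply hK₀ hε hLip hGCP hu hv x
  have hself : ∀ u x, sSup {s : ℝ | ∃ L ∈ 𝒦, L.base = x ∧
      s = I u x + L.apply (fun y => u y - u y)} = I u x := fun u x => by
    have : {s : ℝ | ∃ L ∈ 𝒦, L.base = x ∧ s = I u x + L.apply (fun y => u y - u y)}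
        = {I u x} := by
      ext s
      simp only [Levy1Data.apply_sub_self, add_zero, mem_ofPred_eq, mem_singleton_iff]
      exact ⟨fun ⟨_, _, _, h⟩ => h, fun h => ⟨_, levy1Bounds_zero (by positivity) x, rfl, h⟩⟩
    rw [this, csSup_singleton]
  refine ⟨𝒦, fun L hL => hL, key, fun u hu x => ⟨?_, hself u x⟩⟩
  refine eq_csInf_csSup_of_le hu (hself u x)
    (fun v hv => bddAbove_add_apply hε.1 (hu.sub hv) x (I v x)) fun v hv => ?_
  obtain ⟨L, hL, hb, hle⟩ := key u v hu hv x
  exact ⟨_, ⟨L, hL, hb, rfl⟩, hle⟩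

/-- min-max formula for Lipschitz operators `I : C¹_b(ℝ^d) → C_b(ℝ^d)`
with the GCP and the locality assumption: the linear functionals have no second-order
diffusion part, and the formula holds for `u, v ∈ C^{1,ε}_b(ℝ^d)`. -/
theorem minmax_C1b (d : ℕ) (hd : 1 ≤ d) (K₀ : ℝ) (hK₀ : 0 ≤ K₀)
    (ε : ℝ) (hε : ε ∈ Set.Ioo (0 : ℝ) 1) :
    ∃ Λ : ℝ, 0 < Λ ∧
      ∀ I : (Euc d → ℝ) → Euc d → ℝ,
        (∀ u, IsC1b u → IsCb (I u)) →
        LipWith K₀ IsC1b C1Norm I →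
        GCP IsC1b I →
        Locality IsC1b localC1Norm I →
        ∃ 𝒦 : Set (Levy1Data d),
          (∀ L ∈ 𝒦, Levy1Bounds Λ ε L) ∧
          (∀ u v, IsC1Holder ε u → IsC1Holder ε v → ∀ x : Euc d,
            ∃ L ∈ 𝒦, L.base = x ∧ I u x ≤ I v x + L.apply (fun y => u y - v y)) ∧
          (∀ u, IsC1Holder ε u → ∀ x : Euc d,
            I u x = sInf {r : ℝ | ∃ v, IsC1Holder ε v ∧
                r = sSup {s : ℝ | ∃ L ∈ 𝒦, L.base = x ∧
                      s = I v x + L.apply (fun y => u y - v y)}} ∧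
            sSup {s : ℝ | ∃ L ∈ 𝒦, L.base = x ∧
                s = I u x + L.apply (fun y => u y - u y)} = I u x) :=
  minmax_C1b_general d K₀ hK₀ ε hε
end
end

section
/- Let d ≥ 1, γ ∈ (0,1), and let I : C^{0,γ}_b(ℝ^d) → C_b(ℝ^d) be Lipschitz with constant K₀, satisfy the global comparison property, and satisfy the locality assumption (with C^{0,γ} norms). Fix ε ∈ (0,1−γ). Then there exist a constant Λ (depending only on d, K₀, γ, ε) and a family 𝒦 of linear functionals, each based at some point x ∈ ℝ^d and of the purely integro-differential form L(u) = C·u(x) + ∫_{ℝ^d∖{x}} ( u(y) − u(x) ) dμ(y) with C ∈ ℝ, μ a nonnegative Borel measure on ℝ^d∖{x}, |C| ≤ Λ and ∫ min(1,|y−x|^γ) dμ(y) ≤ Λ (in particular, with no drift and no diffusion part), such that: (i) for all u, v ∈ C^{0,γ+ε}_b(ℝ^d) and all x ∈ ℝ^d there exists L ∈ 𝒦 based at x with I(u)(x) ≤ I(v)(x) + L(u − v); and consequently (ii) for every u ∈ C^{0,γ+ε}_b(ℝ^d) and every x ∈ ℝ^d, I(u)(x) = inf over v ∈ C^{0,γ+ε}_b(ℝ^d)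 of the sup over L ∈ 𝒦 based at x of ( I(v)(x) + L(u − v) ), the infimum being attained at v = u. -/
open MeasureTheory Metric Filter Set

noncomputable section

variable {d : ℕ}

/-- `γ`-Hölder seminorm -/
def holderSemi (γ : ℝ) (u : Euc d → ℝ) : ℝ :=
  sInf {M : ℝ | 0 ≤ M ∧ ∀ x y, |u x - u y| ≤ M * ‖x - y‖ ^ γ}

/-- the `C^{0,γ}` norm : `sup|u| + [u]_γ` -/
def holderNorm (γ : ℝ) (u : Euc d → ℝ) : ℝ := supNorm u + holderSemi γ u

/-- membership in `C^{0,γ}_b(ℝ^d)` : bounded `γ`-Hölder continuous functions -/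
def IsHolderB (γ : ℝ) (u : Euc d → ℝ) : Prop :=
  (∃ M : ℝ, ∀ x, |u x| ≤ M) ∧ ∃ M : ℝ, ∀ x y, |u x - u y| ≤ M * ‖x - y‖ ^ γ

/-- `γ`-Hölder seminorm restricted to the closed ball of radius `r` -/
def localHolderSemi (γ r : ℝ) (u : Euc d → ℝ) : ℝ :=
  sInf {M : ℝ | 0 ≤ M ∧ ∀ x ∈ closedBall (0 : Euc d) r, ∀ y ∈ closedBall (0 : Euc d) r,
    |u x - u y| ≤ M * ‖x - y‖ ^ γ}

/-- the `C^{0,γ}` norm restricted to the closed ball of radius `r` -/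
def localHolderNorm (γ r : ℝ) (u : Euc d → ℝ) : ℝ := localSup r u + localHolderSemi γ r u

/-- the data of a purely integro-differential Lévy-type functional, based at `base` -/
structure Levy0Data (d : ℕ) where
  base : Euc d
  C : ℝ
  μ : Measure (Euc d)

/-- action of a purely integro-differential Lévy-type functional:
`C u(x) + ∫ (u(y) - u(x)) dμ(y)` -/
def Levy0Data.apply (L : Levy0Data d) (u : Euc d → ℝ) : ℝ :=
  L.C * u L.base + ∫ y, (u y - u L.base) ∂L.μ

def Levy0Bounds (Λ γ : ℝ) (L : Levy0Data d) : Prop :=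
  |L.C| ≤ Λ ∧ L.μ {L.base} = 0 ∧
    (∫⁻ y, ENNReal.ofReal (min 1 (‖y - L.base‖ ^ γ)) ∂L.μ) ≤ ENNReal.ofReal Λ

/-! Fix `u, v, x`, write `w = u - v`, `ρ y = min 1 (‖y - x‖ ^ γ)`, and let `q ≥ 0` be the least
constant with `w y - w x ≤ q ρ y` for all `y`. Since `ρ` is `γ`-Hölder, the function
`φ = v + w x + q ρ` lies in `C^{0,γ}_b`, lies above `u` and touches it at `x`, so the GCP and the
Lipschitz bound give `I u x ≤ I φ x ≤ I v x + K₀ (|w x| + 2 q)`. This is at most `L w` for the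
functional with `C = K₀ sign (w x)` and `μ` a point mass of weight `4 K₀ / ρ z` at a point `z`
with `w z - w x ≥ q ρ z / 2`. Hence the class of all admissible functionals with `Λ = 4 K₀ + 1`
works, and the min-max formula follows because `v = u` realises the value `I u x`. -/

lemma Real.abs_rpow_sub_rpow_le {s t γ : ℝ} (hs : 0 ≤ s) (ht : 0 ≤ t) (hγ0 : 0 ≤ γ)
    (hγ1 : γ ≤ 1) : |s ^ γ - t ^ γ| ≤ |s - t| ^ γ := by
  wlog hts : t ≤ s generalizing s t
  · rw [abs_sub_comm, abs_sub_comm s]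
    exact this ht hs (le_of_not_ge hts)
  have hsub := Real.rpow_add_le_add_rpow (sub_nonneg.2 hts) ht hγ0 hγ1
  rw [sub_add_cancel] at hsub
  rw [abs_of_nonneg (sub_nonneg.2 (Real.rpow_le_rpow ht hts hγ0)),
    abs_of_nonneg (sub_nonneg.2 hts)]
  linarith

lemma abs_min_one_rpow_norm_sub_le {E : Type*} [SeminormedAddCommGroup E] {γ : ℝ} (hγ0 : 0 ≤ γ)
    (hγ1 : γ ≤ 1) (x a b : E) :
    |min 1 (‖a - x‖ ^ γ) - min 1 (‖b - x‖ ^ γ)| ≤ ‖a - b‖ ^ γ :=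
  calc |min 1 (‖a - x‖ ^ γ) - min 1 (‖b - x‖ ^ γ)|
      ≤ |‖a - x‖ ^ γ - ‖b - x‖ ^ γ| := by
        simpa using abs_min_sub_min_le_max 1 (‖a - x‖ ^ γ) 1 (‖b - x‖ ^ γ)
    _ ≤ |‖a - x‖ - ‖b - x‖| ^ γ :=
        Real.abs_rpow_sub_rpow_le (norm_nonneg _) (norm_nonneg _) hγ0 hγ1
    _ ≤ ‖a - b‖ ^ γ := by
        gcongr
        simpa using abs_norm_sub_norm_le (a - x) (b - x)

lemma min_one_rpow_le_rpow {t γ δ : ℝ} (ht : 0 ≤ t) (hγ : 0 ≤ γ) (hγδ : γ ≤ δ) :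
    min 1 (t ^ δ) ≤ t ^ γ := by
  rcases le_total t 1 with h | h
  · exact (min_le_right _ _).trans (Real.rpow_le_rpow_of_exponent_ge' ht h hγ hγδ)
  · exact (min_le_left _ _).trans (Real.one_le_rpow h hγ)

lemma abs_min_one_rpow_le_one {t : ℝ} (ht : 0 ≤ t) (γ : ℝ) : |min 1 (t ^ γ)| ≤ 1 := by
  rw [abs_of_nonneg (le_min zero_le_one (by positivity))]
  exact min_le_left _ _

lemma holderNorm_le {γ B M : ℝ} {u : Euc d → ℝ} (hB : ∀ x, |u x| ≤ B) (hM : 0 ≤ M)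
    (hu : ∀ x y, |u x - u y| ≤ M * ‖x - y‖ ^ γ) : holderNorm γ u ≤ B + M :=
  add_le_add (ciSup_le hB) (csInf_le ⟨0, fun _ hM' => hM'.1⟩ ⟨hM, hu⟩)

namespace IsHolderB

variable {γ δ : ℝ} {u v : Euc d → ℝ}

lemma exists_abs_sub_le_mul_min_one (hu : IsHolderB γ u) :
    ∃ K, 0 ≤ K ∧ ∀ a b, |u a - u b| ≤ K * min 1 (‖a - b‖ ^ γ) := by
  obtain ⟨⟨B, hB⟩, M, hM⟩ := hu
  have hB0 : 0 ≤ B := (abs_nonneg _).trans (hB 0)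
  refine ⟨max M (2 * B), le_max_of_le_right (by linarith), fun a b => ?_⟩
  rcases min_choice 1 (‖a - b‖ ^ γ) with h | h <;> rw [h]
  · calc |u a - u b| ≤ |u a| + |u b| := abs_sub _ _
      _ ≤ max M (2 * B) * 1 := by linarith [hB a, hB b, le_max_right M (2 * B)]
  · exact (hM a b).trans (mul_le_mul_of_nonneg_right (le_max_left _ _) (by positivity))

lemma mono (hu : IsHolderB δ u) (hγ : 0 ≤ γ) (hγδ : γ ≤ δ) : IsHolderB γ u := by
  obtain ⟨K, hK, hKu⟩ := hu.exists_abs_sub_le_mul_min_one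
  exact ⟨hu.1, K, fun a b => (hKu a b).trans
    (mul_le_mul_of_nonneg_left (min_one_rpow_le_rpow (norm_nonneg _) hγ hγδ) hK)⟩

lemma const (c : ℝ) : IsHolderB γ (fun _ : Euc d => c) :=
  ⟨⟨|c|, fun _ => le_rfl⟩, 0, fun _ _ => by simp⟩

lemma add (hu : IsHolderB γ u) (hv : IsHolderB γ v) : IsHolderB γ (fun y => u y + v y) := by
  obtain ⟨⟨Bu, hBu⟩, Mu, hMu⟩ := hu
  obtain ⟨⟨Bv, hBv⟩, Mv, hMv⟩ := hv
  refine ⟨⟨Bu + Bv, fun y => (abs_add_le _ _).trans (add_le_add (hBu y) (hBv y))⟩,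
    Mu + Mv, fun a b => ?_⟩
  calc |u a + v a - (u b + v b)| = |(u a - u b) + (v a - v b)| := by ring_nf
    _ ≤ |u a - u b| + |v a - v b| := abs_add_le _ _
    _ ≤ (Mu + Mv) * ‖a - b‖ ^ γ := by linarith [hMu a b, hMv a b]

lemma const_mul (hu : IsHolderB γ u) (c : ℝ) : IsHolderB γ (fun y => c * u y) := by
  obtain ⟨⟨B, hB⟩, M, hM⟩ := hu
  refine ⟨⟨|c| * B, fun y => ?_⟩, |c| * M, fun a b => ?_⟩
  · rw [abs_mul]
    exact mul_le_mul_of_nonneg_left (hB y) (abs_nonneg c)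
  · rw [← mul_sub, abs_mul, mul_assoc]
    exact mul_le_mul_of_nonneg_left (hM a b) (abs_nonneg c)

lemma sub (hu : IsHolderB γ u) (hv : IsHolderB γ v) : IsHolderB γ (fun y => u y - v y) := by
  simpa [sub_eq_add_neg] using hu.add (hv.const_mul (-1))

end IsHolderB

lemma isHolderB_min_one_rpow_norm_sub {γ : ℝ} (hγ0 : 0 ≤ γ) (hγ1 : γ ≤ 1) (x : Euc d) :
    IsHolderB γ (fun y => min 1 (‖y - x‖ ^ γ)) :=
  ⟨⟨1, fun y => abs_min_one_rpow_le_one (norm_nonneg _) γ⟩,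
    1, fun a b => by simpa using abs_min_one_rpow_norm_sub_le hγ0 hγ1 x a b⟩

lemma GCP.apply_le_of_sub_le_mul_min_one {I : (Euc d → ℝ) → Euc d → ℝ} {γ K₀ q : ℝ}
    (hGCP : GCP (IsHolderB γ) I) (hLip : LipWith K₀ (IsHolderB γ) (holderNorm γ) I)
    (hγ0 : 0 < γ) (hγ1 : γ ≤ 1) (hK₀ : 0 ≤ K₀) (hq : 0 ≤ q) {u v : Euc d → ℝ}
    (hu : IsHolderB γ u) (hv : IsHolderB γ v) {x : Euc d}
    (huv : ∀ y, u y - v y - (u x - v x) ≤ q * min 1 (‖y - x‖ ^ γ)) :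
    I u x ≤ I v x + K₀ * (|u x - v x| + 2 * q) := by
  set ρ : Euc d → ℝ := fun y => min 1 (‖y - x‖ ^ γ)
  have hρ : IsHolderB γ ρ := isHolderB_min_one_rpow_norm_sub hγ0.le hγ1 x
  set φ : Euc d → ℝ := fun y => v y + (u x - v x + q * ρ y)
  have hφ : IsHolderB γ φ := hv.add ((IsHolderB.const _).add (hρ.const_mul q))
  have hφu : ∀ y, u y ≤ φ y := fun y => by linarith [huv y]
  have hφux : u x = φ x := by simp [φ, ρ, Real.zero_rpow hγ0.ne']
  have hφv : holderNorm γ (fun y => φ y - v y) ≤ |u x - v x| + q + q := by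
    refine holderNorm_le (fun y => ?_) hq (fun a b => ?_)
    · calc |φ y - v y| = |u x - v x + q * ρ y| := by simp only [φ, add_sub_cancel_left]
        _ ≤ |u x - v x| + q * 1 := by
          grw [abs_add_le, abs_mul, abs_of_nonneg hq, abs_min_one_rpow_le_one (norm_nonneg _) γ]
        _ = |u x - v x| + q := by rw [mul_one]
    · simpa [φ, ← mul_sub, abs_mul, abs_of_nonneg hq] using
        mul_le_mul_of_nonneg_left (abs_min_one_rpow_norm_sub_le hγ0.le hγ1 x a b) hq
  calc I u x ≤ I φ x := hGCP u φ hu hφ hφu x hφux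
    _ ≤ I v x + K₀ * holderNorm γ (fun y => φ y - v y) := by
      linarith [(abs_le.1 (hLip φ v hφ hv x)).2]
    _ ≤ I v x + K₀ * (|u x - v x| + 2 * q) := by
      gcongr
      linarith

namespace Levy0Data

lemma apply_smul_dirac (x z : Euc d) (C : ℝ) {a : ℝ} (ha : 0 ≤ a) (w : Euc d → ℝ) :
    (⟨x, C, ENNReal.ofReal a • Measure.dirac z⟩ : Levy0Data d).apply w
      = C * w x + a * (w z - w x) := by
  rw [apply, integral_smul_measure, integral_dirac, ENNReal.toReal_ofReal ha, smul_eq_mul]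

lemma apply_le {Λ γ K : ℝ} {L : Levy0Data d} (hL : Levy0Bounds Λ γ L) (hK : 0 ≤ K)
    {w : Euc d → ℝ} (hw : ∀ y, |w y - w L.base| ≤ K * min 1 (‖y - L.base‖ ^ γ)) :
    L.apply w ≤ Λ * |w L.base| + K * Λ := by
  obtain ⟨hC, -, hμ⟩ := hL
  have hΛ : 0 ≤ Λ := (abs_nonneg _).trans hC
  have hCw : L.C * w L.base ≤ Λ * |w L.base| :=
    (le_abs_self _).trans (by rw [abs_mul]; gcongr)
  have hlint : ∫⁻ y, ENNReal.ofReal ‖w y - w L.base‖ ∂L.μ ≤ ENNReal.ofReal (K * Λ) :=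
    calc ∫⁻ y, ENNReal.ofReal ‖w y - w L.base‖ ∂L.μ
        ≤ ∫⁻ y, ENNReal.ofReal K * ENNReal.ofReal (min 1 (‖y - L.base‖ ^ γ)) ∂L.μ :=
          lintegral_mono fun y => by
            rw [← ENNReal.ofReal_mul hK, Real.norm_eq_abs]
            exact ENNReal.ofReal_le_ofReal (hw y)
      _ ≤ ENNReal.ofReal (K * Λ) := by
          rw [lintegral_const_mul' _ _ ENNReal.ofReal_ne_top, ENNReal.ofReal_mul hK]
          gcongr
  have hint : ∫ y, (w y - w L.base) ∂L.μ ≤ K * Λ :=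
    calc ∫ y, (w y - w L.base) ∂L.μ ≤ ‖∫ y, (w y - w L.base) ∂L.μ‖ := Real.le_norm_self _
      _ ≤ (∫⁻ y, ENNReal.ofReal ‖w y - w L.base‖ ∂L.μ).toReal :=
          norm_integral_le_lintegral_norm _
      _ ≤ K * Λ := ENNReal.toReal_le_of_le_ofReal (by positivity) hlint
  exact add_le_add hCw hint

@[simp]
lemma apply_sub_self (L : Levy0Data d) (u : Euc d → ℝ) :
    L.apply (fun y => u y - u y) = 0 := by
  simp [apply]

end Levy0Data

lemma levy0Bounds_zero {Λ γ C : ℝ} (x : Euc d) (hC : |C| ≤ Λ) :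
    Levy0Bounds Λ γ (⟨x, C, 0⟩ : Levy0Data d) :=
  ⟨hC, rfl, by simp⟩

lemma levy0Bounds_smul_dirac {Λ γ C a : ℝ} {x z : Euc d} (hC : |C| ≤ Λ) (hzx : z ≠ x)
    (ha : 0 ≤ a) (haz : a * min 1 (‖z - x‖ ^ γ) ≤ Λ) :
    Levy0Bounds Λ γ (⟨x, C, ENNReal.ofReal a • Measure.dirac z⟩ : Levy0Data d) := by
  refine ⟨hC, by simp [hzx.symm], ?_⟩
  rw [lintegral_smul_measure, lintegral_dirac, smul_eq_mul, ← ENNReal.ofReal_mul ha]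
  exact ENNReal.ofReal_le_ofReal haz

lemma exists_levy0Bounds_le_apply {γ K₀ q : ℝ} (hγ0 : 0 < γ) (hK₀ : 0 ≤ K₀) (hq : 0 ≤ q)
    {w : Euc d → ℝ} {x : Euc d}
    (hz : 0 < q → ∃ z, 0 < min 1 (‖z - x‖ ^ γ) ∧ q / 2 * min 1 (‖z - x‖ ^ γ) ≤ w z - w x) :
    ∃ L : Levy0Data d, Levy0Bounds (4 * K₀ + 1) γ L ∧ L.base = x ∧
      K₀ * (|w x| + 2 * q) ≤ L.apply w := by
  set C := K₀ * SignType.sign (w x)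
  have hCw : C * w x = K₀ * |w x| := by rw [mul_assoc, sign_mul_self]
  have hC : |C| ≤ 4 * K₀ + 1 := by
    rw [abs_mul, abs_of_nonneg hK₀]
    have hsign : |(SignType.sign (w x) : ℝ)| ≤ 1 := by cases SignType.sign (w x) <;> simp
    nlinarith
  rcases hq.eq_or_lt with rfl | hq
  · exact ⟨⟨x, C, 0⟩, levy0Bounds_zero x hC, rfl, by simp [Levy0Data.apply, hCw]⟩
  obtain ⟨z, hρz, hwz⟩ := hz hq
  have hzx : z ≠ x := by
    rintro rfl
    simp [Real.zero_rpow hγ0.ne'] at hρz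
  set a := 4 * K₀ / min 1 (‖z - x‖ ^ γ)
  have ha : 0 ≤ a := by positivity
  have haρ : a * min 1 (‖z - x‖ ^ γ) = 4 * K₀ := div_mul_cancel₀ _ hρz.ne'
  refine ⟨⟨x, C, ENNReal.ofReal a • Measure.dirac z⟩,
    levy0Bounds_smul_dirac hC hzx ha (by linarith), rfl, ?_⟩
  rw [Levy0Data.apply_smul_dirac x z C ha, hCw]
  have : 2 * K₀ * q ≤ a * (w z - w x) :=
    calc 2 * K₀ * q = a * (q / 2 * min 1 (‖z - x‖ ^ γ)) := by linear_combination q / 2 * haρ.symm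
      _ ≤ a * (w z - w x) := by gcongr
  linarith

theorem exists_levy0Bounds_le_add_apply {I : (Euc d → ℝ) → Euc d → ℝ} {γ K₀ : ℝ}
    (hGCP : GCP (IsHolderB γ) I) (hLip : LipWith K₀ (IsHolderB γ) (holderNorm γ) I)
    (hγ0 : 0 < γ) (hγ1 : γ ≤ 1) (hK₀ : 0 ≤ K₀) {u v : Euc d → ℝ}
    (hu : IsHolderB γ u) (hv : IsHolderB γ v) (x : Euc d) :
    ∃ L : Levy0Data d, Levy0Bounds (4 * K₀ + 1) γ L ∧ L.base = x ∧
      I u x ≤ I v x + L.apply (fun y => u y - v y) := by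
  set w : Euc d → ℝ := fun y => u y - v y
  set ρ : Euc d → ℝ := fun y => min 1 (‖y - x‖ ^ γ)
  obtain ⟨K, hK0, hK⟩ := (hu.sub hv).exists_abs_sub_le_mul_min_one
  have hwK : ∀ y, w y - w x ≤ K * ρ y := fun y => (le_abs_self _).trans (hK y x)
  have hρ : ∀ y, 0 ≤ ρ y := fun y => le_min zero_le_one (by positivity)
  have hbdd : BddAbove (range fun y => (w y - w x) / ρ y) :=
    ⟨K, forall_mem_range.2 fun y => div_le_of_le_mul₀ (hρ y) hK0 (hwK y)⟩
  -- at `y = x` the quotient is the junk value `0 / 0 = 0`, which makes `q ≥ 0`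
  set q := ⨆ y, (w y - w x) / ρ y
  have hq : 0 ≤ q := by simpa using le_ciSup hbdd x
  have hwq : ∀ y, w y - w x ≤ q * ρ y := fun y => by
    rcases (hρ y).eq_or_lt with hρy | hρy
    · simpa [← hρy] using hwK y
    · exact (div_le_iff₀ hρy).1 (le_ciSup hbdd y)
  obtain ⟨L, hL, hLx, hLw⟩ := exists_levy0Bounds_le_apply (w := w) (x := x) hγ0 hK₀ hq fun hq => by
    obtain ⟨z, hz⟩ := exists_lt_of_lt_ciSup (show q / 2 < q by linarith)
    have hρz : 0 < ρ z := (hρ z).lt_of_ne fun hρz => by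
      simp only [← hρz, div_zero] at hz
      linarith
    exact ⟨z, hρz, ((lt_div_iff₀ hρz).1 hz).le⟩
  exact ⟨L, hL, hLx, (hGCP.apply_le_of_sub_le_mul_min_one hLip hγ0 hγ1 hK₀ hq hu hv hwq).trans
    (by linarith)⟩

lemma bddAbove_add_levy0Data_apply {Λ γ c : ℝ} {w : Euc d → ℝ} (hw : IsHolderB γ w) (x : Euc d) :
    BddAbove {s : ℝ | ∃ L ∈ {L : Levy0Data d | Levy0Bounds Λ γ L}, L.base = x ∧
      s = c + L.apply w} := by
  obtain ⟨K, hK0, hK⟩ := hw.exists_abs_sub_le_mul_min_one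
  refine ⟨c + (Λ * |w x| + K * Λ), ?_⟩
  rintro s ⟨L, hL, rfl, rfl⟩
  exact add_le_add le_rfl (L.apply_le hL hK0 fun y => hK y L.base)

theorem minmax_C0gamma_general (d : ℕ) (γ : ℝ) (hγ : γ ∈ Set.Ioo (0 : ℝ) 1)
    (K₀ : ℝ) (hK₀ : 0 ≤ K₀) (ε : ℝ) (hε : ε ∈ Set.Ioo (0 : ℝ) (1 - γ)) :
    ∃ Λ : ℝ, 0 < Λ ∧
      ∀ I : (Euc d → ℝ) → Euc d → ℝ,
        (∀ u, IsHolderB γ u → IsCb (I u)) →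
        LipWith K₀ (IsHolderB γ) (holderNorm γ) I →
        GCP (IsHolderB γ) I →
        Locality (IsHolderB γ) (localHolderNorm γ) I →
        ∃ 𝒦 : Set (Levy0Data d),
          (∀ L ∈ 𝒦, Levy0Bounds Λ γ L) ∧
          (∀ u v, IsHolderB (γ + ε) u → IsHolderB (γ + ε) v → ∀ x : Euc d,
            ∃ L ∈ 𝒦, L.base = x ∧ I u x ≤ I v x + L.apply (fun y => u y - v y)) ∧
          (∀ u, IsHolderB (γ + ε) u → ∀ x : Euc d,
            I u x = sInf {r : ℝ | ∃ v, IsHolderB (γ + ε) v ∧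
                r = sSup {s : ℝ | ∃ L ∈ 𝒦, L.base = x ∧
                      s = I v x + L.apply (fun y => u y - v y)}} ∧
            sSup {s : ℝ | ∃ L ∈ 𝒦, L.base = x ∧
                s = I u x + L.apply (fun y => u y - u y)} = I u x) := by
  obtain ⟨hγ0, hγ1⟩ := hγ
  have hmono : ∀ {u : Euc d → ℝ}, IsHolderB (γ + ε) u → IsHolderB γ u :=
    fun hu => hu.mono hγ0.le (by linarith [hε.1])
  refine ⟨4 * K₀ + 1, by positivity, fun I _ hLip hGCP _ => ?_⟩
  have key := fun u v (hu : IsHolderB (γ + ε) u) (hv : IsHolderB (γ + ε) v) x =>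
    exists_levy0Bounds_le_add_apply hGCP hLip hγ0 hγ1.le hK₀ (hmono hu) (hmono hv) x
  refine ⟨{L | Levy0Bounds (4 * K₀ + 1) γ L}, fun L hL => hL, key, fun u hu x => ?_⟩
  have hself : {s | ∃ L ∈ {L : Levy0Data d | Levy0Bounds (4 * K₀ + 1) γ L}, L.base = x ∧
      s = I u x + L.apply (fun y => u y - u y)} = {I u x} := by
    ext s
    simp only [mem_ofPred_eq, mem_singleton_iff, Levy0Data.apply_sub_self, add_zero]
    exact ⟨fun ⟨_, _, _, hs⟩ => hs,
      fun hs => ⟨⟨x, 0, 0⟩, levy0Bounds_zero x (by rw [abs_zero]; positivity), rfl, hs⟩⟩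
  refine ⟨Eq.symm <| IsLeast.csInf_eq ⟨⟨u, hu, by rw [hself, csSup_singleton]⟩, ?_⟩,
    by rw [hself, csSup_singleton]⟩
  rintro r ⟨v, hv, rfl⟩
  obtain ⟨L, hL, hLx, hle⟩ := key u v hu hv x
  exact hle.trans (le_csSup (bddAbove_add_levy0Data_apply ((hmono hu).sub (hmono hv)) x)
    ⟨L, hL, hLx, rfl⟩)

/-- min-max formula for Lipschitz operators `I : C^{0,γ}_b(ℝ^d) → C_b(ℝ^d)`
with the GCP and the locality assumption: the linear functionals are purely
integro-differential (no drift, no diffusion), and the formula holds for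
`u, v ∈ C^{0,γ+ε}_b(ℝ^d)`. -/
theorem minmax_C0gamma (d : ℕ) (hd : 1 ≤ d) (γ : ℝ) (hγ : γ ∈ Set.Ioo (0 : ℝ) 1)
    (K₀ : ℝ) (hK₀ : 0 ≤ K₀) (ε : ℝ) (hε : ε ∈ Set.Ioo (0 : ℝ) (1 - γ)) :
    ∃ Λ : ℝ, 0 < Λ ∧
      ∀ I : (Euc d → ℝ) → Euc d → ℝ,
        (∀ u, IsHolderB γ u → IsCb (I u)) →
        LipWith K₀ (IsHolderB γ) (holderNorm γ) I →
        GCP (IsHolderB γ) I →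
        Locality (IsHolderB γ) (localHolderNorm γ) I →
        ∃ 𝒦 : Set (Levy0Data d),
          (∀ L ∈ 𝒦, Levy0Bounds Λ γ L) ∧
          (∀ u v, IsHolderB (γ + ε) u → IsHolderB (γ + ε) v → ∀ x : Euc d,
            ∃ L ∈ 𝒦, L.base = x ∧ I u x ≤ I v x + L.apply (fun y => u y - v y)) ∧
          (∀ u, IsHolderB (γ + ε) u → ∀ x : Euc d,
            I u x = sInf {r : ℝ | ∃ v, IsHolderB (γ + ε) v ∧
                r = sSup {s : ℝ | ∃ L ∈ 𝒦, L.base = x ∧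
                      s = I v x + L.apply (fun y => u y - v y)}} ∧
            sSup {s : ℝ | ∃ L ∈ 𝒦, L.base = x ∧
                s = I u x + L.apply (fun y => u y - u y)} = I u x) :=
  minmax_C0gamma_general d γ hγ K₀ hK₀ ε hε
end
end

section
/- Let G be a finite set and let I : ℝ^G → ℝ^G be a Lipschitz map (with respect to the sup norm on ℝ^G) satisfying the global comparison property. Then every linear map L belonging to the full Clarke differential 𝒟I of I also satisfies the global comparison property; that is, whenever φ : G → ℝ satisfies φ ≤ 0 on G and φ(x₀) = 0, then L(φ)(x₀) ≤ 0. -/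
open Filter

noncomputable section

variable {G : Type*} [Fintype G]

/-- the set of limits of Fréchet derivatives of `I` along sequences converging to `u` -/
def clarkeLimits (I : (G → ℝ) → (G → ℝ)) (u : G → ℝ) :
    Set ((G → ℝ) →L[ℝ] (G → ℝ)) :=
  {L | ∃ f : ℕ → G → ℝ, (∀ n, DifferentiableAt ℝ I (f n)) ∧
        Tendsto f atTop (nhds u) ∧
        Tendsto (fun n => fderiv ℝ I (f n)) atTop (nhds L)}

/-- the Clarke differential of `I` at `u` -/
def clarkeDiffAt (I : (G → ℝ) → (G → ℝ)) (u : G → ℝ) :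
    Set ((G → ℝ) →L[ℝ] (G → ℝ)) :=
  closure (convexHull ℝ (clarkeLimits I u))

/-- the full Clarke differential of `I` -/
def clarkeDiff (I : (G → ℝ) → (G → ℝ)) : Set ((G → ℝ) →L[ℝ] (G → ℝ)) :=
  closure (convexHull ℝ (⋃ u : G → ℝ, clarkeDiffAt I u))

/-!
If `I` has the global comparison property and is differentiable at `p`, then `w ↦ I w x` is
maximal at `p` on the set of `w ≤ p` touching `p` at `x`. Each direction `u - v` with `u ≤ v`,
`u x = v x` enters that set along a segment, so the derivative is nonpositive on it: the derivative
inherits the property. Linear maps with the property form a closed convex set, which therefore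
contains all limits of derivatives, their closed convex hulls, and the full Clarke differential.
-/

def GlobalComparison {X : Type*} (I : (X → ℝ) → X → ℝ) : Prop :=
  ∀ u v : X → ℝ, u ≤ v → ∀ x, u x = v x → I u x ≤ I v x

namespace GlobalComparison

variable {X : Type*}

theorem apply_nonpos {L : (X → ℝ) →L[ℝ] (X → ℝ)} (hL : GlobalComparison L) {φ : X → ℝ}
    (hφ : φ ≤ 0) {x : X} (hx : φ x = 0) : L φ x ≤ 0 := by
  simpa using hL φ 0 hφ x hx

theorem convex_setOf :
    Convex ℝ {L : (X → ℝ) →L[ℝ] (X → ℝ) | GlobalComparison L} := by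
  intro L₁ h₁ L₂ h₂ a b ha hb _ u v huv x hx
  simp only [add_apply, smul_apply, Pi.add_apply, Pi.smul_apply, smul_eq_mul]
  gcongr
  exacts [h₁ u v huv x hx, h₂ u v huv x hx]

variable [Fintype X]

theorem isClosed_setOf :
    IsClosed {L : (X → ℝ) →L[ℝ] (X → ℝ) | GlobalComparison L} := by
  simp only [GlobalComparison, Set.ofPred_forall]
  exact isClosed_iInter fun u => isClosed_iInter fun v => isClosed_iInter fun _ =>
    isClosed_iInter fun x => isClosed_iInter fun _ => isClosed_le (by fun_prop) (by fun_prop)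

theorem hasFDerivAt {I : (X → ℝ) → X → ℝ} {L : (X → ℝ) →L[ℝ] (X → ℝ)} {p : X → ℝ}
    (hI : GlobalComparison I) (hL : HasFDerivAt I L p) : GlobalComparison L := by
  intro u v huv x hx
  set s := {w : X → ℝ | w ≤ p ∧ w x = p x}
  have hmax : IsMaxOn (fun w => I w x) s p := fun w hw => hI w p hw.1 x hw.2
  have hseg : segment ℝ p (p + (u - v)) ⊆ s := by
    rintro w ⟨a, b, ha, hb, hab, rfl⟩
    refine ⟨fun y => ?_, ?_⟩
    · simp only [Pi.add_apply, Pi.smul_apply, Pi.sub_apply, smul_eq_mul]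
      have hp : a * p y + b * p y = p y := by rw [← add_mul, hab, one_mul]
      linarith [mul_nonpos_of_nonneg_of_nonpos hb (sub_nonpos.2 (huv y))]
    · simp only [Pi.add_apply, Pi.smul_apply, Pi.sub_apply, smul_eq_mul, hx, sub_self]
      linear_combination hab * p x
  have hdir := hmax.localize.hasFDerivWithinAt_nonpos
    (hasFDerivAt_pi'.1 hL x).hasFDerivWithinAt
    (mem_posTangentConeAt_of_segment_subset hseg)
  simpa [sub_nonpos] using hdir

theorem fderiv {I : (X → ℝ) → X → ℝ} {p : X → ℝ} (hI : GlobalComparison I)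
    (hp : DifferentiableAt ℝ I p) : GlobalComparison (fderiv ℝ I p) :=
  hI.hasFDerivAt hp.hasFDerivAt

end GlobalComparison

section Clarke

variable {G : Type*} [Fintype G] {I : (G → ℝ) → (G → ℝ)}

theorem closure_convexHull_subset_setOf_globalComparison
    {A : Set ((G → ℝ) →L[ℝ] (G → ℝ))} (hA : ∀ L ∈ A, GlobalComparison L) :
    closure (convexHull ℝ A) ⊆ {L | GlobalComparison L} :=
  closure_minimal (convexHull_min hA GlobalComparison.convex_setOf)
    GlobalComparison.isClosed_setOf

theorem GlobalComparison.of_mem_clarkeLimits (hI : GlobalComparison I) {u : G → ℝ}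
    {L : (G → ℝ) →L[ℝ] (G → ℝ)} (hL : L ∈ clarkeLimits I u) : GlobalComparison L := by
  obtain ⟨f, hdiff, -, hlim⟩ := hL
  exact GlobalComparison.isClosed_setOf.mem_of_tendsto hlim
    (Eventually.of_forall fun n => hI.fderiv (hdiff n))

theorem GlobalComparison.of_mem_clarkeDiff (hI : GlobalComparison I)
    {L : (G → ℝ) →L[ℝ] (G → ℝ)} (hL : L ∈ clarkeDiff I) : GlobalComparison L :=
  closure_convexHull_subset_setOf_globalComparison
    (fun _ hL' => by
      obtain ⟨_, ⟨u, rfl⟩, hu⟩ := hL'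
      exact closure_convexHull_subset_setOf_globalComparison
        (fun _ => hI.of_mem_clarkeLimits) hu) hL

end Clarke

theorem clarkeDiff_GCP_general (G : Type*) [Fintype G]
    (I : (G → ℝ) → (G → ℝ))
    (hGCP : ∀ u v : G → ℝ, (∀ y, u y ≤ v y) → ∀ x, u x = v x → I u x ≤ I v x) :
    ∀ L ∈ clarkeDiff I, ∀ φ : G → ℝ, (∀ y, φ y ≤ 0) → ∀ x₀ : G, φ x₀ = 0 →
      L φ x₀ ≤ 0 :=
  fun _ hL _ hφ _ hx₀ =>
    (GlobalComparison.of_mem_clarkeDiff hGCP hL).apply_nonpos hφ hx₀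

/-- for a Lipschitz map `I : ℝ^G → ℝ^G` with the global comparison
property, every element of the full Clarke differential of `I` also satisfies the global
comparison property. -/
theorem clarkeDiff_GCP (G : Type*) [Fintype G] [Nonempty G]
    (I : (G → ℝ) → (G → ℝ)) (K₀ : NNReal) (hLip : LipschitzWith K₀ I)
    (hGCP : ∀ u v : G → ℝ, (∀ y, u y ≤ v y) → ∀ x, u x = v x → I u x ≤ I v x) :
    ∀ L ∈ clarkeDiff I, ∀ φ : G → ℝ, (∀ y, φ y ≤ 0) → ∀ x₀ : G, φ x₀ = 0 →
      L φ x₀ ≤ 0 :=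
  clarkeDiff_GCP_general G I hGCP

end
end

section
/- Let G be a finite set and let I : ℝ^G → ℝ^G be a Lipschitz map (with respect to the sup norm on ℝ^G). Then for every u ∈ ℝ^G and every x ∈ G, I(u)(x) = min over v ∈ ℝ^G of the max over L ∈ 𝒟I of ( I(v)(x) + L(u − v)(x) ), where 𝒟I is the full Clarke differential of I; the inner maximum is attained for each v (𝒟I being compact and convex, all its elements having operator norm at most the Lipschitz constant of I), and the outer minimum is attained at v = u. -/
/-!
Every derivative of `I` has operator norm at most the Lipschitz constant, so `𝒟I` is a compact
convex set, the inner maxima are attained, and at `v = u` the inner set is `{I u x}`. The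
remaining inequality `I u x ≤ max_{L ∈ 𝒟I} (I v x + L (u - v) x)` is a mean value inequality for
`p ↦ I p x` in direction `d = u - v`. By Fubini, for almost every `w` the line `t ↦ w + t • d`
meets the differentiability points of `I` for almost every `t`; along such a line the Lipschitz
function `t ↦ I (w + t • d) x` is absolutely continuous with derivative `DI(w + t • d) d x`, which
is bounded by the maximum, and the fundamental theorem of calculus gives the inequality at `w`.
These `w` are dense, and the inequality passes to `w = v` by continuity.
-/

open Filter

noncomputable section

variable {G : Type*} [Fintype G]

section LineIntegration

open MeasureTheory Set

theorem AbsolutelyContinuousOnInterval.sub_le_of_ae_deriv_le {g : ℝ → ℝ} {a b c : ℝ}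
    (hg : AbsolutelyContinuousOnInterval g a b) (hab : a ≤ b)
    (hc : ∀ᵐ t, t ∈ Icc a b → deriv g t ≤ c) : g b - g a ≤ c * (b - a) := by
  calc g b - g a = ∫ t in a..b, deriv g t := hg.integral_deriv_eq_sub.symm
    _ ≤ ∫ _ in a..b, c :=
      intervalIntegral.integral_mono_ae_restrict hab hg.intervalIntegrable_deriv
        intervalIntegrable_const ((ae_restrict_iff' measurableSet_Icc).2 hc)
    _ = c * (b - a) := by simp [mul_comm]

variable {E : Type*} [NormedAddCommGroup E] [NormedSpace ℝ E] [MeasurableSpace E] [BorelSpace E]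

theorem ae_ae_add_smul_mem (μ : Measure E) [SFinite μ] [μ.IsAddRightInvariant] {s : Set E}
    (hs : MeasurableSet s) (h : ∀ᵐ p ∂μ, p ∈ s) (d : E) :
    ∀ᵐ w ∂μ, ∀ᵐ t : ℝ, w + t • d ∈ s := by
  have hmeas : MeasurableSet {q : E × ℝ | q.1 + q.2 • d ∈ s} :=
    (by fun_prop : Continuous fun q : E × ℝ => q.1 + q.2 • d).measurable hs
  refine (Measure.ae_ae_comm hmeas).2 (Filter.Eventually.of_forall fun t => ?_)
  exact (measurePreserving_add_right μ (t • d)).quasiMeasurePreserving.ae h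

theorem LipschitzWith.sub_le_of_ae_fderiv_le [FiniteDimensional ℝ E] (μ : Measure E)
    [μ.IsAddHaarMeasure] {f : E → ℝ} {K : NNReal} (hf : LipschitzWith K f) {d : E} {c : ℝ}
    (hc : ∀ᵐ p ∂μ, fderiv ℝ f p d ≤ c) (v : E) : f (v + d) - f v ≤ c := by
  set s := {p | DifferentiableAt ℝ f p ∧ fderiv ℝ f p d ≤ c}
  have hs : MeasurableSet s := (measurableSet_of_differentiableAt ℝ f).inter
    (measurableSet_le (measurable_fderiv_apply_const ℝ f d) measurable_const)
  have hgood : ∀ᵐ w ∂μ, ∀ᵐ t : ℝ, w + t • d ∈ s :=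
    ae_ae_add_smul_mem μ hs ((hf.ae_differentiableAt (μ := μ)).and hc) d
  have hsegment : ∀ w, (∀ᵐ t : ℝ, w + t • d ∈ s) → f (w + d) - f w ≤ c := by
    intro w hw
    have hline : LipschitzWith (K * ‖d‖₊) fun t : ℝ => f (w + t • d) :=
      hf.comp <| LipschitzWith.of_dist_le_mul fun s t => by
        simp [dist_eq_norm, ← sub_smul, norm_smul, mul_comm]
    have hderiv : ∀ᵐ t, t ∈ Icc (0 : ℝ) 1 → deriv (fun t : ℝ => f (w + t • d)) t ≤ c := by
      filter_upwards [hw] with t ⟨hdiff, hle⟩ _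
      have : HasDerivAt (fun t : ℝ => w + t • d) d t := by
        simpa using ((hasDerivAt_id t).smul_const d).const_add w
      exact (hdiff.hasFDerivAt.comp_hasDerivAt t this).deriv ▸ hle
    simpa using (hline.lipschitzOnWith (s := uIcc 0 1)).absolutelyContinuousOnInterval
      |>.sub_le_of_ae_deriv_le zero_le_one hderiv
  have hclosed : IsClosed {w | f (w + d) - f w ≤ c} :=
    isClosed_le ((hf.continuous.comp (continuous_add_const d)).sub hf.continuous) continuous_const
  exact hclosed.closure_subset_iff.2 (fun w hw => hsegment w hw) (Measure.dense_of_ae hgood v)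

end LineIntegration

section Clarke

open MeasureTheory

variable {ι : Type*} {I : (ι → ℝ) → (ι → ℝ)}

def clarkeLinearizationValues (I : (ι → ℝ) → (ι → ℝ)) (u v : ι → ℝ) (x : ι) : Set ℝ :=
  {s | ∃ L ∈ clarkeDiff I, s = I v x + L (u - v) x}

theorem fderiv_mem_clarkeDiff {p : ι → ℝ} (h : DifferentiableAt ℝ I p) :
    fderiv ℝ I p ∈ clarkeDiff I :=
  subset_closure <| subset_convexHull ℝ _ <| Set.mem_iUnion.2 ⟨p, subset_closure <|
    subset_convexHull ℝ _ ⟨fun _ => p, fun _ => h, tendsto_const_nhds, tendsto_const_nhds⟩⟩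

variable [Fintype ι] {K : NNReal}

theorem clarkeDiff_nonempty (hI : LipschitzWith K I) : (clarkeDiff I).Nonempty :=
  let ⟨_, hp⟩ := (hI.ae_differentiableAt (μ := volume)).exists
  ⟨_, fderiv_mem_clarkeDiff hp⟩

theorem clarkeDiff_subset_closedBall (hI : LipschitzWith K I) :
    clarkeDiff I ⊆ Metric.closedBall 0 K := by
  have hball := convex_closedBall (0 : (ι → ℝ) →L[ℝ] (ι → ℝ)) K
  have hclosed := Metric.isClosed_closedBall (x := (0 : (ι → ℝ) →L[ℝ] (ι → ℝ))) (ε := K)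
  have hlimits (u : ι → ℝ) : clarkeLimits I u ⊆ Metric.closedBall 0 K := by
    rintro L ⟨f, -, -, hL⟩
    rw [mem_closedBall_zero_iff]
    exact le_of_tendsto hL.norm (Eventually.of_forall fun n => norm_fderiv_le_of_lipschitz ℝ hI)
  refine closure_minimal (convexHull_min (Set.iUnion_subset fun u => ?_) hball) hclosed
  exact closure_minimal (convexHull_min (hlimits u) hball) hclosed

theorem norm_le_of_mem_clarkeDiff (hI : LipschitzWith K I) {L : (ι → ℝ) →L[ℝ] (ι → ℝ)}
    (hL : L ∈ clarkeDiff I) : ‖L‖ ≤ K :=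
  mem_closedBall_zero_iff.1 (clarkeDiff_subset_closedBall hI hL)

theorem isCompact_clarkeDiff (hI : LipschitzWith K I) : IsCompact (clarkeDiff I) :=
  (isCompact_closedBall 0 _).of_isClosed_subset isClosed_closure (clarkeDiff_subset_closedBall hI)

variable (u v : ι → ℝ) (x : ι)

theorem isCompact_clarkeLinearizationValues (hI : LipschitzWith K I) :
    IsCompact (clarkeLinearizationValues I u v x) := by
  have himage : clarkeLinearizationValues I u v x =
      (fun L : (ι → ℝ) →L[ℝ] (ι → ℝ) => I v x + L (u - v) x) '' clarkeDiff I := by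
    ext s
    exact exists_congr fun L => and_congr_right' eq_comm
  rw [himage]
  exact (isCompact_clarkeDiff hI).image (by fun_prop)

theorem sSup_clarkeLinearizationValues_mem (hI : LipschitzWith K I) :
    sSup (clarkeLinearizationValues I u v x) ∈ clarkeLinearizationValues I u v x :=
  let ⟨L, hL⟩ := clarkeDiff_nonempty hI
  (isCompact_clarkeLinearizationValues u v x hI).sSup_mem ⟨_, L, hL, rfl⟩

theorem clarkeLinearizationValues_self (hI : LipschitzWith K I) :
    clarkeLinearizationValues I u u x = {I u x} := by
  ext s
  simp only [clarkeLinearizationValues, sub_self, map_zero, Pi.zero_apply, add_zero,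
    Set.mem_singleton_iff]
  exact ⟨fun ⟨_, _, hs⟩ => hs, fun hs => (clarkeDiff_nonempty hI).imp fun _ hL => ⟨hL, hs⟩⟩

theorem le_sSup_clarkeLinearizationValues (hI : LipschitzWith K I) :
    I u x ≤ sSup (clarkeLinearizationValues I u v x) := by
  have hbdd := (isCompact_clarkeLinearizationValues u v x hI).bddAbove
  have hfderiv : ∀ᵐ p, fderiv ℝ (fun p => I p x) p (u - v) ≤
      sSup (clarkeLinearizationValues I u v x) - I v x := by
    filter_upwards [hI.ae_differentiableAt (μ := volume)] with p hp
    rw [fderiv_apply hp x]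
    have := le_csSup hbdd ⟨fderiv ℝ I p, fderiv_mem_clarkeDiff hp, rfl⟩
    simp only [ContinuousLinearMap.coe_comp, Function.comp_apply, ContinuousLinearMap.proj_apply]
    linarith
  have hIx : LipschitzWith K fun p => I p x := LipschitzWith.of_dist_le_mul fun p q =>
    (dist_le_pi_dist (I p) (I q) x).trans (hI.dist_le_mul p q)
  have := hIx.sub_le_of_ae_fderiv_le volume hfderiv v
  rw [add_sub_cancel] at this
  linarith

end Clarke

theorem finite_minmax_general (G : Type*) [Fintype G]
    (I : (G → ℝ) → (G → ℝ)) (K₀ : NNReal) (hLip : LipschitzWith K₀ I) :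
    IsCompact (clarkeDiff I) ∧ Convex ℝ (clarkeDiff I) ∧
    (∀ L ∈ clarkeDiff I, ‖L‖ ≤ (K₀ : ℝ)) ∧
    ∀ (u : G → ℝ) (x : G),
      (∀ v : G → ℝ,
        sSup {s : ℝ | ∃ L ∈ clarkeDiff I, s = I v x + L (u - v) x}
          ∈ {s : ℝ | ∃ L ∈ clarkeDiff I, s = I v x + L (u - v) x}) ∧
      I u x = sInf {r : ℝ | ∃ v : G → ℝ,
          r = sSup {s : ℝ | ∃ L ∈ clarkeDiff I, s = I v x + L (u - v) x}} ∧
      sSup {s : ℝ | ∃ L ∈ clarkeDiff I, s = I u x + L (u - u) x} = I u x := by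
  refine ⟨isCompact_clarkeDiff hLip, (convex_convexHull ℝ _).closure,
    fun L hL => norm_le_of_mem_clarkeDiff hLip hL, fun u x => ?_⟩
  have hu : sSup (clarkeLinearizationValues I u u x) = I u x := by
    rw [clarkeLinearizationValues_self u x hLip, csSup_singleton]
  refine ⟨fun v => sSup_clarkeLinearizationValues_mem u v x hLip, ?_, hu⟩
  refine (IsLeast.csInf_eq ?_).symm
  refine ⟨⟨u, hu.symm⟩, ?_⟩
  rintro _ ⟨v, rfl⟩
  exact le_sSup_clarkeLinearizationValues u v x hLip

/-- min-max formula for Lipschitz maps `I : ℝ^G → ℝ^G` on a finite set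
`G`: `I(u)(x) = min_v max_{L ∈ 𝒟I} (I(v)(x) + L(u-v)(x))`, the full Clarke differential
`𝒟I` being compact, convex, and norm-bounded by the Lipschitz constant; the inner max is
attained for each `v` and the outer min is attained at `v = u`. -/
theorem finite_minmax (G : Type*) [Fintype G] [Nonempty G]
    (I : (G → ℝ) → (G → ℝ)) (K₀ : NNReal) (hLip : LipschitzWith K₀ I) :
    IsCompact (clarkeDiff I) ∧ Convex ℝ (clarkeDiff I) ∧
    (∀ L ∈ clarkeDiff I, ‖L‖ ≤ (K₀ : ℝ)) ∧
    ∀ (u : G → ℝ) (x : G),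
      (∀ v : G → ℝ,
        sSup {s : ℝ | ∃ L ∈ clarkeDiff I, s = I v x + L (u - v) x}
          ∈ {s : ℝ | ∃ L ∈ clarkeDiff I, s = I v x + L (u - v) x}) ∧
      I u x = sInf {r : ℝ | ∃ v : G → ℝ,
          r = sSup {s : ℝ | ∃ L ∈ clarkeDiff I, s = I v x + L (u - v) x}} ∧
      sSup {s : ℝ | ∃ L ∈ clarkeDiff I, s = I u x + L (u - u) x} = I u x :=
  finite_minmax_general G I K₀ hLip

end
end

section
/- Let G be a finite set and let I : ℝ^G → ℝ^G be a Lipschitz map (with respect to the sup norm) with Lipschitz constant K₀, satisfying the global comparison property. Then there exist a nonempty index set A, for each a ∈ A a nonempty index set B_a, and families of functions f^{ab} : G → ℝ, c^{ab} : G → ℝ and kernels K^{ab} : G × G → ℝ with K^{ab}(x,y) ≥ 0 for all x ≠ y, such that for every u ∈ ℝ^G and every x ∈ G: I(u)(x) = min over a ∈ A of the max over b ∈ B_a of ( f^{ab}(x) + c^{ab}(x)·u(x) + Σ_{y ∈ G, y ≠ x} ( u(y) − u(x) )·K^{ab}(x,y) ), where both the minimum and the maximum are attained; moreover, for each a, b,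 the linear operator u ↦ c^{ab}(·)u(·) + Σ_{y≠·}(u(y)−u(·))K^{ab}(·,y) has operator norm (sup norm to sup norm) at most K₀. -/
open Finset

noncomputable section

/-- the linear part `c(x) u(x) + ∑_{y ≠ x} (u(y) - u(x)) K(x,y)` -/
def linVal {G : Type*} [Fintype G] [DecidableEq G]
    (c : G → ℝ) (K : G → G → ℝ) (u : G → ℝ) (x : G) : ℝ :=
  c x * u x + ∑ y ∈ Finset.univ.erase x, (u y - u x) * K x y

def mmC {G : Type*} (k : ℝ) : Option G → G → ℝ
  | none, _ => -k
  | some _, _ => k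

def mmK {G : Type*} [DecidableEq G] (k : ℝ) : Option G → G → G → ℝ
  | none, _, _ => 0
  | some y₀, _, y => if y = y₀ then k else 0

lemma linVal_none {G : Type*} [Fintype G] [DecidableEq G] (k : ℝ) (u : G → ℝ) (x : G) :
    linVal (mmC k none) (mmK k none) u x = -k * u x := by
  simp [linVal, mmC, mmK]

lemma linVal_some {G : Type*} [Fintype G] [DecidableEq G] (k : ℝ) (y₀ : G) (u : G → ℝ) (x : G) :
    linVal (mmC k (some y₀)) (mmK k (some y₀)) u x = k * u y₀ := by
  unfold linVal mmC mmK
  have : ∑ y ∈ Finset.univ.erase x, (u y - u x) * (if y = y₀ then k else 0)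
      = if y₀ ∈ Finset.univ.erase x then (u y₀ - u x) * k else 0 := by
    rw [← Finset.sum_ite_eq' (Finset.univ.erase x) y₀ (fun y => (u y - u x) * k)]
    exact Finset.sum_congr rfl (fun y _ => by split <;> simp
    )
  rw [this]
  by_cases h : y₀ = x
  · simp [h]
  · rw [if_pos (by simp [h])]; ring

lemma gcp_lip_bound {G : Type*} [Fintype G] [DecidableEq G] [Nonempty G]
    (I : (G → ℝ) → (G → ℝ)) (K₀ : NNReal) (hLip : LipschitzWith K₀ I)
    (hGCP : ∀ u v : G → ℝ, (∀ y, u y ≤ v y) → ∀ x, u x = v x → I u x ≤ I v x)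
    (u v : G → ℝ) (x : G) (m : ℝ) (hm1 : v x - u x ≤ m) (hm2 : ∀ y, u y - v y ≤ m) :
    I u x ≤ I v x + (K₀ : ℝ) * m := by
  have hm0 : 0 ≤ m := by have := hm2 x; linarith
  set h : G → ℝ := fun y => if y = x then u x else v y + m with hh
  have h1 : ∀ y, u y ≤ h y := by
    intro y
    by_cases hy : y = x
    · simp [hh, hy]
    · simp only [hh, if_neg hy]; have := hm2 y; linarith
  have h2 : I u x ≤ I h x := hGCP u h h1 x (by simp [hh])
  have hdist : dist h v ≤ m := by
    rw [dist_pi_le_iff hm0]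
    intro y
    by_cases hy : y = x
    · subst hy
      simp only [hh, if_pos rfl, Real.dist_eq]
      rw [abs_le]; constructor <;> [linarith [hm1]; linarith [hm2 y]]
    · simp only [hh, if_neg hy, Real.dist_eq]
      rw [abs_le]; constructor <;> linarith
  have h3 : dist (I h x) (I v x) ≤ (K₀ : ℝ) * m := by
    calc dist (I h x) (I v x) ≤ dist (I h) (I v) := dist_le_pi_dist (I h) (I v) x
    _ ≤ (K₀ : ℝ) * dist h v := hLip.dist_le_mul h v
    _ ≤ (K₀ : ℝ) * m := by
        exact mul_le_mul_of_nonneg_left hdist K₀.coe_nonneg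
  have := abs_le.mp (by rwa [Real.dist_eq] at h3) |>.2
  linarith

def mmC' {G : Type*} (k : ℝ) {n : ℕ} (e : G ≃ Fin n) (b : Option (Fin n)) : G → ℝ :=
  mmC k (Option.map e.symm b)

def mmK' {G : Type*} [DecidableEq G] (k : ℝ) {n : ℕ} (e : G ≃ Fin n)
    (b : Option (Fin n)) : G → G → ℝ :=
  mmK k (Option.map e.symm b)

lemma linVal_mmC'_none {G : Type*} [Fintype G] [DecidableEq G] (k : ℝ) {n : ℕ}
    (e : G ≃ Fin n) (u : G → ℝ) (x : G) :
    linVal (mmC' k e none) (mmK' k e none) u x = -k * u x :=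
  linVal_none k u x

lemma linVal_mmC'_some {G : Type*} [Fintype G] [DecidableEq G] (k : ℝ) {n : ℕ}
    (e : G ≃ Fin n) (i : Fin n) (u : G → ℝ) (x : G) :
    linVal (mmC' k e (some i)) (mmK' k e (some i)) u x = k * u (e.symm i) :=
  linVal_some k (e.symm i) u x

def mmF {G : Type*} [Fintype G] [DecidableEq G] (I : (G → ℝ) → (G → ℝ)) (k : ℝ) {n : ℕ}
    (e : G ≃ Fin n) (a : Fin n → ℝ) (b : Option (Fin n)) (x : G) : ℝ :=
  I (fun g => a (e g)) x - linVal (mmC' k e b) (mmK' k e b) (fun g => a (e g)) x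

/-- a Lipschitz map `I : ℝ^G → ℝ^G` with the global comparison property
is a min-max of affine operators whose linear parts have kernels nonnegative off the
diagonal and operator norm at most the Lipschitz constant `K₀`; both the min and the max
are attained. -/
theorem finite_minmax_kernels (G : Type*) [Fintype G] [DecidableEq G] [Nonempty G]
    (I : (G → ℝ) → (G → ℝ)) (K₀ : NNReal) (hLip : LipschitzWith K₀ I)
    (hGCP : ∀ u v : G → ℝ, (∀ y, u y ≤ v y) → ∀ x, u x = v x → I u x ≤ I v x) :
    ∃ (A : Type) (_ : Nonempty A) (B : A → Type) (_ : ∀ a, Nonempty (B a))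
      (f : (a : A) → B a → G → ℝ) (c : (a : A) → B a → G → ℝ)
      (K : (a : A) → B a → G → G → ℝ),
      (∀ (a : A) (b : B a) (x y : G), x ≠ y → 0 ≤ K a b x y) ∧
      (∀ (a : A) (b : B a) (u : G → ℝ) (x : G),
        |linVal (c a b) (K a b) u x| ≤ (K₀ : ℝ) * ‖u‖) ∧
      ∀ (u : G → ℝ) (x : G),
        (∀ a : A,
          sSup {s : ℝ | ∃ b : B a, s = f a b x + linVal (c a b) (K a b) u x}
            ∈ {s : ℝ | ∃ b : B a, s = f a b x + linVal (c a b) (K a b) u x}) ∧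
        I u x = sInf {r : ℝ | ∃ a : A,
            r = sSup {s : ℝ | ∃ b : B a, s = f a b x + linVal (c a b) (K a b) u x}} ∧
        (∃ a : A,
          sSup {s : ℝ | ∃ b : B a, s = f a b x + linVal (c a b) (K a b) u x} = I u x) := by
  classical
  set k : ℝ := (K₀ : ℝ) with hkdef
  have hk0 : 0 ≤ k := K₀.coe_nonneg
  set n : ℕ := Fintype.card G with hndef
  set e : G ≃ Fin n := Fintype.equivFin G with hedef
  refine ⟨Fin n → ℝ, ⟨fun _ => 0⟩, fun _ => Option (Fin n), fun _ => inferInstance,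
    mmF I k e, fun _ => mmC' k e, fun _ => mmK' k e, ?_, ?_, ?_⟩
  · rintro a (_ | i) x y hxy
    · exact le_refl 0
    · simp only [mmK', mmK, Option.map_some]
      split <;> simp [hk0]
  · rintro a (_ | i) u x
    · rw [linVal_mmC'_none, abs_mul, abs_neg, abs_of_nonneg hk0]
      exact mul_le_mul_of_nonneg_left (norm_le_pi_norm u x) hk0
    · rw [linVal_mmC'_some, abs_mul, abs_of_nonneg hk0]
      exact mul_le_mul_of_nonneg_left (norm_le_pi_norm u (e.symm i)) hk0
  · intro u x
    have hSfin : ∀ a : Fin n → ℝ,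
        ({s : ℝ | ∃ b : Option (Fin n),
          s = mmF I k e a b x + linVal (mmC' k e b) (mmK' k e b) u x}).Finite := by
      intro a
      have : {s : ℝ | ∃ b : Option (Fin n),
          s = mmF I k e a b x + linVal (mmC' k e b) (mmK' k e b) u x}
          = Set.range (fun b : Option (Fin n) =>
            mmF I k e a b x + linVal (mmC' k e b) (mmK' k e b) u x) := by
        ext s; simp [eq_comm]
      rw [this]; exact Set.finite_range _
    have hSne : ∀ a : Fin n → ℝ,
        ({s : ℝ | ∃ b : Option (Fin n),
          s = mmF I k e a b x + linVal (mmC' k e b) (mmK' k e b) u x}).Nonempty :=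
      fun a => ⟨_, ⟨none, rfl⟩⟩
    -- lower bound : I u x ≤ sSup (S a)
    have hlb : ∀ a : Fin n → ℝ, I u x ≤
        sSup {s : ℝ | ∃ b : Option (Fin n),
          s = mmF I k e a b x + linVal (mmC' k e b) (mmK' k e b) u x} := by
      intro a
      set v : G → ℝ := fun g => a (e g) with hv
      set M : ℝ := Finset.univ.sup' Finset.univ_nonempty (fun y => u y - v y) with hM
      set m : ℝ := max (v x - u x) M with hm
      have hm1 : v x - u x ≤ m := le_max_left _ _
      have hm2 : ∀ y, u y - v y ≤ m := by
        intro y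
        have h1 : u y - v y ≤ M :=
          Finset.le_sup' (f := fun z => u z - v z) (Finset.mem_univ y)
        exact le_trans h1 (le_max_right _ _)
      have hkey : I u x ≤ I v x + k * m := gcp_lip_bound I K₀ hLip hGCP u v x m hm1 hm2
      have hmem : I v x + k * m ∈
          {s : ℝ | ∃ b : Option (Fin n),
            s = mmF I k e a b x + linVal (mmC' k e b) (mmK' k e b) u x} := by
        rcases max_choice (v x - u x) M with hc | hc
        · refine ⟨none, ?_⟩
          rw [mmF, linVal_mmC'_none, linVal_mmC'_none, hm, hc]
          ring
        · obtain ⟨y₀, -, hy₀⟩ :=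
            Finset.exists_mem_eq_sup' (Finset.univ_nonempty (α := G)) (fun y => u y - v y)
          refine ⟨some (e y₀), ?_⟩
          rw [mmF, linVal_mmC'_some, linVal_mmC'_some, hm, hc, hM, hy₀,
            Equiv.symm_apply_apply]
          ring
      exact le_trans hkey (le_csSup ((hSfin a).bddAbove) hmem)
    -- at a = u ∘ e.symm the set is {I u x}
    have hVu : (fun g => (fun i => u (e.symm i)) (e g)) = u := by
      funext g; simp
    have hSu : {s : ℝ | ∃ b : Option (Fin n),
          s = mmF I k e (fun i => u (e.symm i)) b x + linVal (mmC' k e b) (mmK' k e b) u x}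
        = {I u x} := by
      ext s
      simp only [Set.mem_setOf_eq, Set.mem_singleton_iff]
      constructor
      · rintro ⟨b, rfl⟩
        rw [mmF, hVu]; ring
      · rintro rfl
        exact ⟨none, by rw [mmF, hVu]; ring⟩
    have hsupu : sSup {s : ℝ | ∃ b : Option (Fin n),
          s = mmF I k e (fun i => u (e.symm i)) b x + linVal (mmC' k e b) (mmK' k e b) u x}
        = I u x := by
      rw [hSu, csSup_singleton]
    refine ⟨fun a => (hSne a).csSup_mem (hSfin a), ?_, ⟨fun i => u (e.symm i), hsupu⟩⟩
    have hTmem : I u x ∈ {r : ℝ | ∃ a : Fin n → ℝ,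
        r = sSup {s : ℝ | ∃ b : Option (Fin n),
          s = mmF I k e a b x + linVal (mmC' k e b) (mmK' k e b) u x}} :=
      ⟨fun i => u (e.symm i), hsupu.symm⟩
    have hTlb : ∀ r ∈ {r : ℝ | ∃ a : Fin n → ℝ,
        r = sSup {s : ℝ | ∃ b : Option (Fin n),
          s = mmF I k e a b x + linVal (mmC' k e b) (mmK' k e b) u x}}, I u x ≤ r := by
      rintro r ⟨a, rfl⟩; exact hlb a
    exact le_antisymm (le_csInf ⟨_, hTmem⟩ hTlb) (csInf_le ⟨I u x, hTlb⟩ hTmem)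

end
end

section
/- There is a constant C = C(d) with the following property. Let h ∈ (0,1] and let G ⊆ ℝ^d be a set such that every x ∈ ℝ^d satisfies dist(x,G) ≤ h. Let f : ℝ^d → ℝ be twice continuously differentiable with bounded Hessian. If f(y) ≥ 0 for all y ∈ G and f(x₀) = 0 for some x₀ ∈ G, then |∇f(x₀)| ≤ C · ( sup_{x ∈ ℝ^d} |D²f(x)| ) · h. -/
/-!
With `M = sup |D²f|`, Taylor's theorem gives `0 ≤ f y ≤ ∇f(x₀)(y - x₀) + M |y - x₀|²` for every
`y ∈ G`. Step from `x₀` a distance `4h` against the gradient and take a point `y ∈ G` within `2h`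
of the landing point: then `∇f(x₀)(y - x₀) ≤ -2h |∇f(x₀)|` while `|y - x₀| ≤ 6h`, so
`2h |∇f(x₀)| ≤ 36 M h²`, i.e. `|∇f(x₀)| ≤ 18 M h`.
-/

open Metric

noncomputable section

section SecondOrderTaylor

variable {E F : Type*} [NormedAddCommGroup E] [NormedSpace ℝ E] [NormedAddCommGroup F]
  [NormedSpace ℝ F] {f : E → F} {M : ℝ}

theorem norm_fderiv_sub_le_of_norm_iteratedFDeriv_two_le (hf : ContDiff ℝ 2 f)
    (hM : ∀ x, ‖iteratedFDeriv ℝ 2 f x‖ ≤ M) (x y : E) :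
    ‖fderiv ℝ f y - fderiv ℝ f x‖ ≤ M * ‖y - x‖ := by
  have hbound : ∀ z, ‖fderiv ℝ (fderiv ℝ f) z‖ ≤ M := fun z => by
    rw [← norm_iteratedFDeriv_one, norm_iteratedFDeriv_fderiv]
    exact hM z
  have hdiff : Differentiable ℝ (fderiv ℝ f) :=
    (hf.fderiv_right (by norm_num)).differentiable one_ne_zero
  exact convex_univ.norm_image_sub_le_of_norm_fderiv_le (fun z _ => hdiff z)
    (fun z _ => hbound z) (Set.mem_univ x) (Set.mem_univ y)

theorem norm_sub_sub_fderiv_le_of_norm_iteratedFDeriv_two_le (hf : ContDiff ℝ 2 f)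
    (hM : ∀ x, ‖iteratedFDeriv ℝ 2 f x‖ ≤ M) (x y : E) :
    ‖f y - f x - fderiv ℝ f x (y - x)‖ ≤ M * ‖y - x‖ ^ 2 := by
  have hM₀ : 0 ≤ M := (norm_nonneg _).trans (hM x)
  have hball : ∀ z ∈ closedBall x ‖y - x‖, ‖fderiv ℝ f z - fderiv ℝ f x‖ ≤ M * ‖y - x‖ :=
    fun z hz => (norm_fderiv_sub_le_of_norm_iteratedFDeriv_two_le hf hM x z).trans <|
      mul_le_mul_of_nonneg_left (mem_closedBall_iff_norm.1 hz) hM₀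
  calc ‖f y - f x - fderiv ℝ f x (y - x)‖ ≤ M * ‖y - x‖ * ‖y - x‖ :=
        (convex_closedBall x _).norm_image_sub_le_of_norm_fderiv_le'
          (fun z _ => (hf.differentiable two_ne_zero) z) hball
          (mem_closedBall_self (norm_nonneg _)) (mem_closedBall_iff_norm.2 le_rfl)
    _ = M * ‖y - x‖ ^ 2 := by ring

end SecondOrderTaylor

section DensePerturbation

variable {E : Type*} [NormedAddCommGroup E] [InnerProductSpace ℝ E] [CompleteSpace E]

theorem ContinuousLinearMap.exists_norm_le_one_apply_eq_norm (ℓ : E →L[ℝ] ℝ) :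
    ∃ e : E, ‖e‖ ≤ 1 ∧ ℓ e = ‖ℓ‖ := by
  set u := (InnerProductSpace.toDual ℝ E).symm ℓ
  have hu : ‖u‖ = ‖ℓ‖ := (InnerProductSpace.toDual ℝ E).symm.norm_map ℓ
  have hℓu : ℓ u = ‖ℓ‖ ^ 2 := by
    rw [← InnerProductSpace.toDual_symm_apply, real_inner_self_eq_norm_sq, hu]
  refine ⟨‖ℓ‖⁻¹ • u, ?_, ?_⟩
  · rw [norm_smul, norm_inv, norm_norm, hu]
    exact inv_mul_le_one_of_le₀ le_rfl (norm_nonneg _)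
  · rw [map_smul, smul_eq_mul, hℓu]
    rcases eq_or_ne ‖ℓ‖ 0 with h | h
    · simp [h]
    · field_simp

theorem ContinuousLinearMap.norm_le_of_nonneg_add_sq_on_dense (ℓ : E →L[ℝ] ℝ) {G : Set E}
    {x₀ : E} {r M : ℝ} (hr : 0 < r) (hM : 0 ≤ M) (hG : ∀ x, ∃ y ∈ G, ‖y - x‖ ≤ r)
    (hℓ : ∀ y ∈ G, 0 ≤ ℓ (y - x₀) + M * ‖y - x₀‖ ^ 2) : ‖ℓ‖ ≤ 9 * M * r := by
  obtain ⟨e, he, hℓe⟩ := ℓ.exists_norm_le_one_apply_eq_norm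
  obtain ⟨y, hyG, hy⟩ := hG (x₀ - (2 * r) • e)
  have hsplit : y - x₀ = (y - (x₀ - (2 * r) • e)) - (2 * r) • e := by abel
  have hℓy : ℓ (y - x₀) ≤ -(r * ‖ℓ‖) := by
    have := ℓ.le_opNorm (y - (x₀ - (2 * r) • e))
    rw [hsplit, map_sub, map_smul, hℓe, smul_eq_mul]
    nlinarith [(Real.le_norm_self _).trans this, norm_nonneg ℓ]
  have hdist : ‖y - x₀‖ ≤ 3 * r := by
    have : ‖(2 * r) • e‖ ≤ 2 * r := by
      rw [norm_smul, Real.norm_of_nonneg (by positivity)]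
      nlinarith
    rw [hsplit]
    linarith [norm_sub_le (y - (x₀ - (2 * r) • e)) ((2 * r) • e)]
  have hsq : M * ‖y - x₀‖ ^ 2 ≤ M * (3 * r) ^ 2 :=
    mul_le_mul_of_nonneg_left (pow_le_pow_left₀ (norm_nonneg _) hdist 2) hM
  nlinarith [hℓ y hyG]

end DensePerturbation

theorem gradient_bound_at_discrete_min_general (d : ℕ) :
    ∃ C : ℝ, 0 < C ∧
      ∀ h : ℝ, h ∈ Set.Ioc (0 : ℝ) 1 →
      ∀ G : Set (Euc d), (∀ x : Euc d, Metric.infDist x G ≤ h) →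
      ∀ f : Euc d → ℝ, ContDiff ℝ 2 f →
        (∃ M : ℝ, ∀ x, ‖iteratedFDeriv ℝ 2 f x‖ ≤ M) →
        (∀ y ∈ G, 0 ≤ f y) →
        ∀ x₀ ∈ G, f x₀ = 0 →
          ‖fderiv ℝ f x₀‖ ≤ C * (⨆ x, ‖iteratedFDeriv ℝ 2 f x‖) * h := by
  refine ⟨18, by norm_num, ?_⟩
  rintro h ⟨hh, -⟩ G hG f hf ⟨M₀, hM₀⟩ hfG x₀ hx₀ hfx₀
  set M := ⨆ x, ‖iteratedFDeriv ℝ 2 f x‖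
  have hM : ∀ x, ‖iteratedFDeriv ℝ 2 f x‖ ≤ M := le_ciSup ⟨M₀, Set.forall_mem_range.2 hM₀⟩
  -- `infDist` need not be attained, so we pass to the radius `2 h`.
  have hdense : ∀ x, ∃ y ∈ G, ‖y - x‖ ≤ 2 * h := fun x => by
    obtain ⟨y, hyG, hxy⟩ := (infDist_lt_iff ⟨x₀, hx₀⟩).1 ((hG x).trans_lt (by linarith : h < 2 * h))
    exact ⟨y, hyG, by rw [← dist_eq_norm, dist_comm]; exact hxy.le⟩
  have hquad : ∀ y ∈ G, 0 ≤ fderiv ℝ f x₀ (y - x₀) + M * ‖y - x₀‖ ^ 2 := fun y hy => by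
    have := (Real.le_norm_self _).trans
      (norm_sub_sub_fderiv_le_of_norm_iteratedFDeriv_two_le hf hM x₀ y)
    linarith [hfG y hy]
  have := (fderiv ℝ f x₀).norm_le_of_nonneg_add_sq_on_dense (by positivity)
    ((norm_nonneg _).trans (hM 0)) hdense hquad
  linarith

/-- if `f` is `C²` with bounded Hessian, nonnegative on a set `G` which
is `h`-dense in `ℝ^d`, and vanishes at some `x₀ ∈ G`, then
`|∇f(x₀)| ≤ C (sup |D²f|) h` with `C = C(d)`. -/
theorem gradient_bound_at_discrete_min (d : ℕ) (hd : 1 ≤ d) :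
    ∃ C : ℝ, 0 < C ∧
      ∀ h : ℝ, h ∈ Set.Ioc (0 : ℝ) 1 →
      ∀ G : Set (Euc d), (∀ x : Euc d, Metric.infDist x G ≤ h) →
      ∀ f : Euc d → ℝ, ContDiff ℝ 2 f →
        (∃ M : ℝ, ∀ x, ‖iteratedFDeriv ℝ 2 f x‖ ≤ M) →
        (∀ y ∈ G, 0 ≤ f y) →
        ∀ x₀ ∈ G, f x₀ = 0 →
          ‖fderiv ℝ f x₀‖ ≤ C * (⨆ x, ‖iteratedFDeriv ℝ 2 f x‖) * h :=
  gradient_bound_at_discrete_min_general d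
end
end

section
/- Let d ≥ 1, γ ∈ (0,1) and λ ∈ (0,1]. There exist constants h₀ = h₀(d) > 0 and C = C(d,γ,λ) with the following property: for every h ∈ (0,h₀] and every (h,λ)-net G ⊆ ℝ^d there exists a map E from bounded real-valued functions on G to bounded continuous functions on ℝ^d such that: (i) E is linear; (ii) E is monotone, i.e. if g₁ ≤ g₂ on G then E(g₁) ≤ E(g₂) on ℝ^d; (iii) E(g)(x) = g(x) for every x ∈ G; (iv) for every u ∈ C^{0,γ}_b(ℝ^d), ‖E(u|_G)‖_{C^{0,γ}} ≤ C·‖u‖_{C^{0,γ}}; and (v) for every bounded C¹ function u : ℝ^d → ℝ with bounded gradient, ‖E(u|_G) − u‖_{C^{0,γ}} ≤ C · h^{1−γ} · ( sup|u| + sup|∇u| ). -/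
/-!
The extension is `E g = ∑ₚ g(p) aₚ` for a partition of unity `aₚ ≥ 0`, `∑ₚ aₚ = 1`, indexed by the
net: positivity gives monotonicity, and `∑ₚ aₚ = 1` gives `|E u(x) - u(x)| ≤ ω`, the oscillation of
`u` on `3h`-balls. Each `aₚ` is a bump of height one on the `λh/4`-ball around `p` (so that
`aₚ(q) = δₚq` on the net), plus the mass missing from the bumps, spread over tents of radius `2h`;
thus `aₚ` lives on `B(p, 2h)` and is `O(K/(λh))`-Lipschitz, where `K = (7/λ)^d` bounds the number of
net points in a `3h`-ball by volume packing. Hence `E u` is `O(K²ω/(λh))`-Lipschitz below scale `h`,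
while above it `|E u - u| ≤ ω` suffices. With `ω ≲ [u]_γ h^γ` for Hölder `u` and `ω ≲ ‖∇u‖ h` for
`C¹` `u`, these two regimes give the Hölder bounds.
-/

open Metric Set

noncomputable section

variable {d : ℕ}

/-- `G` is an `(h, lam)`-net : `h`-dense and with distinct points `lam·h`-separated -/
def IsNet (h lam : ℝ) (G : Set (Euc d)) : Prop :=
  G.Nonempty ∧ (∀ x : Euc d, Metric.infDist x G ≤ h) ∧
    ∀ x ∈ G, ∀ y ∈ G, x ≠ y → lam * h ≤ dist x y

/-- boundedness of a function on the subtype `G` -/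
def BddFun {G : Set (Euc d)} (g : G → ℝ) : Prop := ∃ M : ℝ, ∀ p, |g p| ≤ M

section

variable {X : Type*} [PseudoMetricSpace X]

def tent (r : ℝ) (p x : X) : ℝ := max (r - dist x p) 0

section Tent

variable {r : ℝ} {p x : X}

lemma tent_nonneg (r : ℝ) (p x : X) : 0 ≤ tent r p x := le_max_right _ _

lemma tent_le (hr : 0 ≤ r) (p x : X) : tent r p x ≤ r :=
  max_le (by linarith [dist_nonneg (x := x) (y := p)]) hr

lemma tent_self (hr : 0 ≤ r) (p : X) : tent r p p = r := by
  simp [tent, hr]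

lemma tent_eq_zero (h : r ≤ dist x p) : tent r p x = 0 :=
  max_eq_right (by linarith)

lemma dist_lt_of_tent_ne_zero (h : tent r p x ≠ 0) : dist x p < r := by
  contrapose! h
  exact tent_eq_zero h

lemma abs_tent_sub_tent_le (r : ℝ) (p x y : X) : |tent r p x - tent r p y| ≤ dist x y := by
  refine (abs_max_sub_max_le_abs _ _ _).trans ?_
  rw [sub_sub_sub_cancel_left, abs_sub_comm]
  exact abs_dist_sub_le x y p

lemma continuous_tent (r : ℝ) (p : X) : Continuous (tent r p) := by
  unfold tent
  fun_prop

end Tent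

/-- The bound `card_le` is all that the construction uses of the ambient space; in `ℝ^d` it comes
from volume packing (`IsNet.isUniformNet`). -/
structure IsUniformNet (h lam K : ℝ) (G : Set X) : Prop where
  pos : 0 < h
  lam_pos : 0 < lam
  lam_le_one : lam ≤ 1
  nonempty : G.Nonempty
  infDist_le : ∀ x, infDist x G ≤ h
  separated : ∀ p ∈ G, ∀ q ∈ G, p ≠ q → lam * h ≤ dist p q
  card_le : ∀ (x : X) (T : Finset G), (∀ p ∈ T, dist x p ≤ 3 * h) → (T.card : ℝ) ≤ K

def tentSum (G : Set X) (r : ℝ) (x : X) : ℝ := ∑ᶠ p : G, tent r (p : X) x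

lemma tentSum_nonneg (G : Set X) (r : ℝ) (x : X) : 0 ≤ tentSum G r x :=
  finsum_nonneg fun _ => tent_nonneg _ _ _

def netWeight (G : Set X) (h lam : ℝ) (p : G) (x : X) : ℝ :=
  tent (lam * h / 4) (p : X) x / (lam * h / 4) +
    (1 - tentSum G (lam * h / 4) x / (lam * h / 4)) * (tent (2 * h) (p : X) x / tentSum G (2 * h) x)

def netExtension (G : Set X) (h lam : ℝ) (g : G → ℝ) (x : X) : ℝ :=
  ∑ᶠ p, g p * netWeight G h lam p x

lemma netExtension_const_mul (G : Set X) (h lam c : ℝ) (g : G → ℝ) (x : X) :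
    netExtension G h lam (fun p => c * g p) x = c * netExtension G h lam g x := by
  simp only [netExtension, mul_finsum, mul_assoc]

namespace IsUniformNet

variable {h lam K r : ℝ} {G : Set X} (hG : IsUniformNet h lam K G)
include hG

lemma one_le : 1 ≤ K := by
  obtain ⟨p, hp⟩ := hG.nonempty
  simpa using hG.card_le p {⟨p, hp⟩} (by simp [hG.pos.le])

lemma finite_near (x : X) : {p : G | dist x p ≤ 3 * h}.Finite := by
  by_contra hinf
  obtain ⟨T, hT, hcard⟩ := Set.Infinite.exists_subset_card_eq hinf (⌊K⌋₊ + 1)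
  have := hG.card_le x T fun p hp => hT hp
  rw [hcard, Nat.cast_add, Nat.cast_one] at this
  linarith [Nat.lt_floor_add_one K]

def near (x : X) : Finset G := (hG.finite_near x).toFinset

lemma mem_near {x : X} {p : G} : p ∈ hG.near x ↔ dist x p ≤ 3 * h := by
  simp [near]

lemma card_near_le (x : X) : ((hG.near x).card : ℝ) ≤ K :=
  hG.card_le x _ fun _ hp => hG.mem_near.1 hp

lemma finsum_eq_sum_near {f : G → ℝ} {x : X} (hf : ∀ p, f p ≠ 0 → dist x p ≤ 3 * h) :
    ∑ᶠ p, f p = ∑ p ∈ hG.near x, f p :=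
  finsum_eq_sum_of_support_subset f fun p hp => hG.mem_near.2 (hf p hp)

lemma abs_finsum_sub_finsum_le {f g : G → ℝ} {x : X} {c : ℝ} (hc : 0 ≤ c)
    (hf : ∀ p, f p ≠ 0 → dist x p ≤ 3 * h) (hg : ∀ p, g p ≠ 0 → dist x p ≤ 3 * h)
    (hfg : ∀ p : G, dist x p ≤ 3 * h → |f p - g p| ≤ c) :
    |(∑ᶠ p, f p) - ∑ᶠ p, g p| ≤ K * c := by
  rw [hG.finsum_eq_sum_near hf, hG.finsum_eq_sum_near hg, ← Finset.sum_sub_distrib]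
  calc |∑ p ∈ hG.near x, (f p - g p)| ≤ ∑ p ∈ hG.near x, |f p - g p| :=
        Finset.abs_sum_le_sum_abs _ _
    _ ≤ ∑ _p ∈ hG.near x, c := Finset.sum_le_sum fun p hp => hfg p (hG.mem_near.1 hp)
    _ ≤ K * c := by
        rw [Finset.sum_const, nsmul_eq_mul]
        exact mul_le_mul_of_nonneg_right (hG.card_near_le x) hc

lemma locallyFinite_support {f : G → X → ℝ} (hf : ∀ p z, f p z ≠ 0 → dist z p ≤ 2 * h) :
    LocallyFinite fun p => Function.support (f p) := by
  intro x
  refine ⟨ball x h, ball_mem_nhds x hG.pos, (hG.finite_near x).subset ?_⟩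
  rintro p ⟨z, hz, hzx⟩
  have := hf p z hz
  have := mem_ball'.1 hzx
  calc dist x p ≤ dist x z + dist z p := dist_triangle _ _ _
    _ ≤ 3 * h := by linarith

lemma tent_le_tentSum (hr : r ≤ 3 * h) (p : G) (x : X) : tent r ↑p x ≤ tentSum G r x :=
  single_le_finsum (f := fun q : G => tent r ↑q x) p
    ((hG.finite_near x).subset fun _ hq => (dist_lt_of_tent_ne_zero hq).le.trans hr)
    fun _ => tent_nonneg _ _ _

lemma half_le_tentSum (x : X) : h / 2 ≤ tentSum G (2 * h) x := by
  obtain ⟨p, hp, hxp⟩ := (infDist_lt_iff hG.nonempty).1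
    ((hG.infDist_le x).trans_lt (by linarith [hG.pos] : h < 3 * h / 2))
  calc h / 2 ≤ tent (2 * h) p x := le_max_of_le_left (by linarith)
    _ ≤ tentSum G (2 * h) x := hG.tent_le_tentSum (by linarith [hG.pos]) ⟨p, hp⟩ x

lemma tentSum_pos (x : X) : 0 < tentSum G (2 * h) x :=
  (half_pos hG.pos).trans_le (hG.half_le_tentSum x)

/-- Tents of radius at most half the separation have disjoint supports. -/
lemma tentSum_eq_tent (hr : 2 * r ≤ lam * h) {q : G} {x : X} (hq : tent r ↑q x ≠ 0) :
    tentSum G r x = tent r ↑q x := by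
  refine finsum_eq_single _ q fun p hpq => ?_
  by_contra hp
  have := hG.separated p p.2 q q.2 (Subtype.coe_ne_coe.2 hpq)
  have := dist_triangle_left (p : X) q x
  linarith [dist_lt_of_tent_ne_zero hp, dist_lt_of_tent_ne_zero hq]

lemma tentSum_le (hr0 : 0 ≤ r) (hr : 2 * r ≤ lam * h) (x : X) : tentSum G r x ≤ r := by
  by_cases hz : ∃ q : G, tent r ↑q x ≠ 0
  · obtain ⟨q, hq⟩ := hz
    rw [hG.tentSum_eq_tent hr hq]
    exact tent_le hr0 _ _
  · rwa [tentSum, finsum_eq_zero_of_forall_eq_zero fun p => not_not.1 fun hp => hz ⟨p, hp⟩]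

lemma tentSum_apply_coe (hr0 : 0 < r) (hr : 2 * r ≤ lam * h) (q : G) : tentSum G r q = r := by
  have hq : tent r (q : X) q = r := tent_self hr0.le _
  rw [hG.tentSum_eq_tent hr (hq.trans_ne hr0.ne'), hq]

lemma abs_tentSum_sub_le (hr : r ≤ 2 * h) {x y : X} (hxy : dist x y ≤ h) :
    |tentSum G r x - tentSum G r y| ≤ K * dist x y := by
  refine hG.abs_finsum_sub_finsum_le dist_nonneg
    (fun p (hp : tent r ↑p x ≠ 0) => by linarith [dist_lt_of_tent_ne_zero hp, hG.pos])
    (fun p (hp : tent r ↑p y ≠ 0) => ?_) fun p _ => abs_tent_sub_tent_le _ _ _ _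
  linarith [dist_lt_of_tent_ne_zero hp, dist_triangle x y p]

lemma continuous_tentSum (hr : r ≤ 2 * h) : Continuous (tentSum G r) :=
  continuous_finsum (fun _ => continuous_tent _ _)
    (hG.locallyFinite_support fun _ _ hz => (dist_lt_of_tent_ne_zero hz).le.trans hr)

lemma bump_radius_pos : 0 < lam * h / 4 := by
  have := hG.pos; have := hG.lam_pos; positivity

lemma bump_radius_le : lam * h / 4 ≤ h / 4 := by
  have := mul_le_mul_of_nonneg_right hG.lam_le_one hG.pos.le
  linarith

lemma tentSum_div_mem_Icc (x : X) :
    tentSum G (lam * h / 4) x / (lam * h / 4) ∈ Icc (0 : ℝ) 1 :=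
  ⟨div_nonneg (tentSum_nonneg _ _ _) hG.bump_radius_pos.le,
    (div_le_one hG.bump_radius_pos).2
      (hG.tentSum_le hG.bump_radius_pos.le (by linarith [hG.bump_radius_pos]) x)⟩

lemma tent_div_tentSum_mem_Icc (p : G) (x : X) :
    tent (2 * h) (p : X) x / tentSum G (2 * h) x ∈ Icc (0 : ℝ) 1 :=
  ⟨div_nonneg (tent_nonneg _ _ _) (hG.tentSum_pos x).le,
    (div_le_one (hG.tentSum_pos x)).2 (hG.tent_le_tentSum (by linarith [hG.pos]) p x)⟩

lemma netWeight_nonneg (p : G) (x : X) : 0 ≤ netWeight G h lam p x := by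
  have hB := hG.tentSum_div_mem_Icc x
  exact add_nonneg (div_nonneg (tent_nonneg _ _ _) hG.bump_radius_pos.le)
    (mul_nonneg (sub_nonneg.2 hB.2) (hG.tent_div_tentSum_mem_Icc p x).1)

lemma dist_lt_of_netWeight_ne_zero {p : G} {x : X} (hp : netWeight G h lam p x ≠ 0) :
    dist x p < 2 * h := by
  contrapose! hp
  have := hG.bump_radius_le
  rw [netWeight, tent_eq_zero hp, tent_eq_zero (by linarith [hG.pos])]
  simp

lemma finsum_netWeight (x : X) : ∑ᶠ p, netWeight G h lam p x = 1 := by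
  have hnear {r : ℝ} (hr : r ≤ 2 * h) :
      tentSum G r x = ∑ p ∈ hG.near x, tent r (p : X) x :=
    hG.finsum_eq_sum_near fun p hp => by linarith [dist_lt_of_tent_ne_zero hp, hG.pos]
  have hS := (hG.tentSum_pos x).ne'
  rw [hG.finsum_eq_sum_near fun p hp => by linarith [hG.dist_lt_of_netWeight_ne_zero hp, hG.pos]]
  simp only [netWeight, Finset.sum_add_distrib, ← Finset.mul_sum, ← Finset.sum_div]
  rw [← hnear (by linarith [hG.bump_radius_le, hG.pos]), ← hnear le_rfl, div_self hS]
  ring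

lemma netWeight_apply_coe (p q : G) :
    netWeight G h lam p q = tent (lam * h / 4) (p : X) q / (lam * h / 4) := by
  have hr := hG.bump_radius_pos
  rw [netWeight, hG.tentSum_apply_coe hr (by linarith) q, div_self hr.ne', sub_self, zero_mul,
    add_zero]

lemma netWeight_self (p : G) : netWeight G h lam p p = 1 := by
  have hr := hG.bump_radius_pos
  rw [hG.netWeight_apply_coe, tent_self hr.le, div_self hr.ne']

lemma netWeight_of_ne {p q : G} (hpq : p ≠ q) : netWeight G h lam p q = 0 := by
  have := hG.separated q q.2 p p.2 (Subtype.coe_ne_coe.2 hpq.symm)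
  rw [hG.netWeight_apply_coe, tent_eq_zero (by linarith [hG.bump_radius_pos]), zero_div]

lemma continuous_netWeight (p : G) : Continuous (netWeight G h lam p) := by
  have hB := hG.continuous_tentSum (r := lam * h / 4) (by linarith [hG.bump_radius_le, hG.pos])
  exact ((continuous_tent _ _).div_const _).add ((continuous_const.sub (hB.div_const _)).mul
    ((continuous_tent _ _).div (hG.continuous_tentSum le_rfl) fun x => (hG.tentSum_pos x).ne'))

lemma abs_tent_div_tentSum_sub_le (p : G) {x y : X} (hxy : dist x y ≤ h) :
    |tent (2 * h) (p : X) x / tentSum G (2 * h) x - tent (2 * h) (p : X) y / tentSum G (2 * h) y|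
      ≤ (2 + 2 * K) / h * dist x y := by
  have hh := hG.pos
  have hSx := hG.half_le_tentSum x
  have hSy := hG.tentSum_pos y
  have hq := hG.tent_div_tentSum_mem_Icc p y
  have hSx' : 0 < tentSum G (2 * h) x := by linarith
  have hsplit : tent (2 * h) (p : X) x / tentSum G (2 * h) x
      - tent (2 * h) (p : X) y / tentSum G (2 * h) y
      = (tent (2 * h) (p : X) x - tent (2 * h) (p : X) y) / tentSum G (2 * h) x
        + tent (2 * h) (p : X) y / tentSum G (2 * h) y
          * ((tentSum G (2 * h) y - tentSum G (2 * h) x) / tentSum G (2 * h) x) := by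
    field_simp
    ring
  have h1 : |(tent (2 * h) (p : X) x - tent (2 * h) (p : X) y) / tentSum G (2 * h) x|
      ≤ dist x y / (h / 2) := by
    rw [abs_div, abs_of_pos hSx']
    exact div_le_div₀ dist_nonneg (abs_tent_sub_tent_le _ _ _ _) (by positivity) hSx
  have h2 : |(tentSum G (2 * h) y - tentSum G (2 * h) x) / tentSum G (2 * h) x|
      ≤ K * dist x y / (h / 2) := by
    rw [abs_div, abs_of_pos hSx', abs_sub_comm]
    exact div_le_div₀ (mul_nonneg (by linarith [hG.one_le]) dist_nonneg)
      (hG.abs_tentSum_sub_le le_rfl hxy) (by positivity) hSx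
  rw [hsplit]
  refine (abs_add_le _ _).trans ?_
  rw [abs_mul, abs_of_nonneg hq.1]
  calc _ ≤ dist x y / (h / 2) + 1 * (K * dist x y / (h / 2)) :=
        add_le_add h1 (mul_le_mul hq.2 h2 (abs_nonneg _) zero_le_one)
    _ = (2 + 2 * K) / h * dist x y := by field_simp

lemma abs_netWeight_sub_le (p : G) {x y : X} (hxy : dist x y ≤ h) :
    |netWeight G h lam p x - netWeight G h lam p y| ≤ 12 * K / (lam * h) * dist x y := by
  set r := lam * h / 4 with hr_def
  have hr := hG.bump_radius_pos
  have hK := hG.one_le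
  set q : X → ℝ := fun z => tent (2 * h) (p : X) z / tentSum G (2 * h) z
  have hBx := hG.tentSum_div_mem_Icc x
  have hqy := hG.tent_div_tentSum_mem_Icc p y
  have hsplit : netWeight G h lam p x - netWeight G h lam p y
      = (tent r (p : X) x - tent r (p : X) y) / r
        + (1 - tentSum G r x / r) * (q x - q y)
        + (tentSum G r y - tentSum G r x) / r * q y := by
    simp only [netWeight, q, hr_def]
    ring
  have h1 : |(tent r (p : X) x - tent r (p : X) y) / r| ≤ dist x y / r := by
    rw [abs_div, abs_of_pos hr]
    exact div_le_div_of_nonneg_right (abs_tent_sub_tent_le _ _ _ _) hr.le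
  have h2 : |(1 - tentSum G r x / r) * (q x - q y)| ≤ (2 + 2 * K) / h * dist x y := by
    rw [abs_mul, abs_of_nonneg (sub_nonneg.2 hBx.2)]
    exact (mul_le_of_le_one_left (abs_nonneg _) (by linarith [hBx.1])).trans
      (hG.abs_tent_div_tentSum_sub_le p hxy)
  have h3 : |(tentSum G r y - tentSum G r x) / r * q y| ≤ K * dist x y / r := by
    rw [abs_mul, abs_of_nonneg hqy.1, abs_div, abs_of_pos hr, abs_sub_comm]
    refine mul_le_of_le_one_right (by positivity) hqy.2 |>.trans ?_
    exact div_le_div_of_nonneg_right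
      (hG.abs_tentSum_sub_le (by linarith [hG.bump_radius_le, hG.pos]) hxy) hr.le
  rw [hsplit]
  refine (abs_add_three _ _ _).trans ((add_le_add_three h1 h2 h3).trans ?_)
  have hl := hG.lam_pos
  have hl1 := hG.lam_le_one
  have hh := hG.pos
  have hsum : dist x y / r + (2 + 2 * K) / h * dist x y + K * dist x y / r
      = (4 + 4 * K + (2 + 2 * K) * lam) / (lam * h) * dist x y := by
    rw [hr_def]
    field_simp
    ring
  rw [hsum]
  gcongr
  nlinarith

lemma dist_le_of_mul_netWeight_ne_zero {g : G → ℝ} {p : G} {x : X}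
    (hp : g p * netWeight G h lam p x ≠ 0) : dist x p ≤ 3 * h :=
  (hG.dist_lt_of_netWeight_ne_zero (right_ne_zero_of_mul hp)).le.trans (by linarith [hG.pos])

lemma netExtension_eq_sum_near (g : G → ℝ) (x : X) :
    netExtension G h lam g x = ∑ p ∈ hG.near x, g p * netWeight G h lam p x :=
  hG.finsum_eq_sum_near fun _ hp => hG.dist_le_of_mul_netWeight_ne_zero hp

lemma netExtension_add (g₁ g₂ : G → ℝ) (x : X) :
    netExtension G h lam (fun p => g₁ p + g₂ p) x
      = netExtension G h lam g₁ x + netExtension G h lam g₂ x := by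
  simp only [hG.netExtension_eq_sum_near, add_mul, Finset.sum_add_distrib]

lemma netExtension_mono {g₁ g₂ : G → ℝ} (hg : ∀ p, g₁ p ≤ g₂ p) (x : X) :
    netExtension G h lam g₁ x ≤ netExtension G h lam g₂ x := by
  rw [hG.netExtension_eq_sum_near, hG.netExtension_eq_sum_near]
  exact Finset.sum_le_sum fun p _ => mul_le_mul_of_nonneg_right (hg p) (hG.netWeight_nonneg p x)

lemma netExtension_apply_coe (g : G → ℝ) (q : G) : netExtension G h lam g q = g q := by
  rw [netExtension, finsum_eq_single _ q fun p hpq => by rw [hG.netWeight_of_ne hpq, mul_zero],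
    hG.netWeight_self, mul_one]

lemma sum_near_netWeight (x : X) : ∑ p ∈ hG.near x, netWeight G h lam p x = 1 := by
  rw [← hG.finsum_netWeight x]
  exact (hG.finsum_eq_sum_near fun _ hp =>
    (hG.dist_lt_of_netWeight_ne_zero hp).le.trans (by linarith [hG.pos])).symm

lemma netExtension_sub_eq (g : G → ℝ) (c : ℝ) (x : X) :
    netExtension G h lam g x - c = ∑ p ∈ hG.near x, (g p - c) * netWeight G h lam p x := by
  simp only [hG.netExtension_eq_sum_near, sub_mul, Finset.sum_sub_distrib, ← Finset.mul_sum,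
    hG.sum_near_netWeight, mul_one]

lemma abs_netExtension_sub_le {g : G → ℝ} {c ω : ℝ} {x : X}
    (hg : ∀ p : G, dist x p ≤ 3 * h → |g p - c| ≤ ω) : |netExtension G h lam g x - c| ≤ ω := by
  rw [hG.netExtension_sub_eq]
  calc |∑ p ∈ hG.near x, (g p - c) * netWeight G h lam p x|
      ≤ ∑ p ∈ hG.near x, |g p - c| * netWeight G h lam p x := by
        refine (Finset.abs_sum_le_sum_abs _ _).trans (le_of_eq ?_)
        simp only [abs_mul, abs_of_nonneg (hG.netWeight_nonneg _ x)]
    _ ≤ ∑ p ∈ hG.near x, ω * netWeight G h lam p x :=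
        Finset.sum_le_sum fun p hp =>
          mul_le_mul_of_nonneg_right (hg p (hG.mem_near.1 hp)) (hG.netWeight_nonneg p x)
    _ = ω := by rw [← Finset.mul_sum, hG.sum_near_netWeight, mul_one]

lemma abs_netExtension_le {g : G → ℝ} {M : ℝ} (hg : ∀ p, |g p| ≤ M) (x : X) :
    |netExtension G h lam g x| ≤ M := by
  simpa using hG.abs_netExtension_sub_le (c := 0) fun p _ => by simpa using hg p

lemma abs_netExtension_sub_netExtension_le {g : G → ℝ} {c ω : ℝ} {x y : X} (hω : 0 ≤ ω)
    (hxy : dist x y ≤ h) (hg : ∀ p : G, dist x p ≤ 3 * h → |g p - c| ≤ ω) :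
    |netExtension G h lam g x - netExtension G h lam g y|
      ≤ 12 * K ^ 2 / (lam * h) * ω * dist x y := by
  have hfin (z : X) :
      netExtension G h lam g z - c = ∑ᶠ p, (g p - c) * netWeight G h lam p z := by
    rw [hG.netExtension_sub_eq]
    exact (hG.finsum_eq_sum_near (f := fun p => (g p - c) * netWeight G h lam p z)
      fun _ hp => hG.dist_le_of_mul_netWeight_ne_zero (g := fun q => g q - c) hp).symm
  rw [← sub_sub_sub_cancel_right _ _ c, hfin, hfin]
  have hc : 0 ≤ ω * (12 * K / (lam * h) * dist x y) := by
    have := hG.one_le; have := hG.lam_pos; have := hG.pos; positivity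
  calc _ ≤ K * (ω * (12 * K / (lam * h) * dist x y)) :=
        hG.abs_finsum_sub_finsum_le hc
          (fun _ hp => hG.dist_le_of_mul_netWeight_ne_zero (g := fun q => g q - c) hp)
          (fun p hp => ?_) fun p hp => ?_
    _ = 12 * K ^ 2 / (lam * h) * ω * dist x y := by ring
  · linarith [hG.dist_lt_of_netWeight_ne_zero (right_ne_zero_of_mul hp), dist_triangle x y p]
  · rw [← mul_sub, abs_mul]
    exact mul_le_mul (hg p hp) (hG.abs_netWeight_sub_le p hxy) (abs_nonneg _) hω

lemma continuous_netExtension (g : G → ℝ) : Continuous (netExtension G h lam g) :=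
  continuous_finsum (fun p => continuous_const.mul (hG.continuous_netWeight p))
    (hG.locallyFinite_support fun _ _ hz =>
      (hG.dist_lt_of_netWeight_ne_zero (right_ne_zero_of_mul hz)).le)

end IsUniformNet

end

open MeasureTheory Module in
/-- Volume packing: the disjoint balls of radius `s / 2` around the points fit into a ball of
radius `R + s / 2`. -/
lemma card_mul_pow_le_of_separated {E : Type*} [NormedAddCommGroup E] [NormedSpace ℝ E]
    [FiniteDimensional ℝ E] {s R : ℝ} (hs : 0 < s) (hR : 0 ≤ R) (x : E) (F : Finset E)
    (hsep : ∀ p ∈ F, ∀ q ∈ F, p ≠ q → s ≤ dist p q) (hF : ∀ p ∈ F, dist x p ≤ R) :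
    (F.card : ℝ) * (s / 2) ^ finrank ℝ E ≤ (R + s / 2) ^ finrank ℝ E := by
  let _ : MeasurableSpace E := borel E
  have : BorelSpace E := ⟨rfl⟩
  set μ : Measure E := Measure.addHaar
  have hs2 : 0 < s / 2 := half_pos hs
  have hdisj : (F : Set E).PairwiseDisjoint fun p => ball p (s / 2) := fun p hp q hq hpq =>
    ball_disjoint_ball (by linarith [hsep p hp q hq hpq])
  have hsub : ⋃ p ∈ F, ball p (s / 2) ⊆ ball x (R + s / 2) := by
    refine iUnion₂_subset fun p hp z hz => ?_
    rw [mem_ball] at hz ⊢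
    linarith [dist_triangle z p x, dist_comm p x, hF p hp]
  have hvol : ∑ p ∈ F, μ (ball p (s / 2)) ≤ μ (ball x (R + s / 2)) := by
    rw [← measure_biUnion_finset hdisj fun _ _ => measurableSet_ball]
    exact measure_mono hsub
  simp only [Measure.addHaar_ball_of_pos μ _ hs2, Finset.sum_const, nsmul_eq_mul, ← mul_assoc]
    at hvol
  rw [Measure.addHaar_ball_of_pos μ x (by positivity : 0 < R + s / 2)] at hvol
  have hle := (ENNReal.mul_le_mul_iff_left (measure_ball_pos μ (0 : E) one_pos).ne'
    measure_ball_lt_top.ne).1 hvol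
  rw [← ENNReal.ofReal_natCast, ← ENNReal.ofReal_mul (by positivity),
    ENNReal.ofReal_le_ofReal_iff (by positivity)] at hle
  exact hle

lemma IsNet.isUniformNet {h lam : ℝ} {G : Set (Euc d)} (hG : IsNet h lam G) (hh : 0 < h)
    (hl : 0 < lam) (hl1 : lam ≤ 1) : IsUniformNet h lam ((7 / lam) ^ d) G where
  pos := hh
  lam_pos := hl
  lam_le_one := hl1
  nonempty := hG.1
  infDist_le := hG.2.1
  separated := hG.2.2
  card_le x T hT := by
    classical
    have hpack := card_mul_pow_le_of_separated (mul_pos hl hh) (by positivity : 0 ≤ 3 * h) x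
      (T.image Subtype.val)
      (fun p hp q hq => by
        obtain ⟨p, -, rfl⟩ := Finset.mem_image.1 hp
        obtain ⟨q, -, rfl⟩ := Finset.mem_image.1 hq
        exact hG.2.2 p p.2 q q.2)
      (fun p hp => by
        obtain ⟨q, hq, rfl⟩ := Finset.mem_image.1 hp
        exact hT q hq)
    rw [Finset.card_image_of_injective T Subtype.val_injective, finrank_euclideanSpace_fin] at hpack
    have hball : (3 * h + lam * h / 2) ^ d ≤ (7 / lam) ^ d * (lam * h / 2) ^ d := by
      rw [← mul_pow]
      refine pow_le_pow_left₀ (by positivity) ?_ d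
      rw [div_mul_eq_mul_div, le_div_iff₀ hl]
      nlinarith [mul_le_mul_of_nonneg_right (mul_le_one₀ hl1 hl.le hl1) hh.le]
    exact le_of_mul_le_mul_right (hpack.trans hball) (by positivity)

lemma le_mul_rpow_of_two_scale {γ h D a L c M : ℝ} (hγ0 : 0 ≤ γ) (hγ1 : γ ≤ 1) (hh : 0 < h)
    (hD : 0 ≤ D) (hL : 0 ≤ L) (hc : 0 ≤ c) (hM : 0 ≤ M) (hnear : D ≤ h → a ≤ L * (D / h))
    (hfar : h < D → a ≤ c + M * D ^ γ) :
    a ≤ ((L + c) / h ^ γ + M) * D ^ γ := by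
  have hhγ : 0 < h ^ γ := Real.rpow_pos_of_pos hh γ
  have hDγ : 0 ≤ D ^ γ / h ^ γ := div_nonneg (Real.rpow_nonneg hD γ) hhγ.le
  have hMD : 0 ≤ M * D ^ γ := mul_nonneg hM (Real.rpow_nonneg hD γ)
  rw [show ((L + c) / h ^ γ + M) * D ^ γ = L * (D ^ γ / h ^ γ) + c * (D ^ γ / h ^ γ) + M * D ^ γ
    by ring]
  rcases le_or_gt D h with hDh | hDh
  · have : D / h ≤ D ^ γ / h ^ γ := by
      rw [← Real.div_rpow hD hh.le]
      exact Real.self_le_rpow_of_le_one (div_nonneg hD hh.le) ((div_le_one hh).2 hDh) hγ1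
    nlinarith [hnear hDh, mul_le_mul_of_nonneg_left this hL, mul_nonneg hc hDγ]
  · have : 1 ≤ D ^ γ / h ^ γ := (one_le_div hhγ).2 (Real.rpow_le_rpow hh.le hDh.le hγ0)
    nlinarith [hfar hDh, mul_le_mul_of_nonneg_left this hc, mul_nonneg hL hDγ]

lemma abs_sub_le_two_mul_add_abs_sub {α : Type*} {F u : α → ℝ} {ω : ℝ} (hF : ∀ x, |F x - u x| ≤ ω)
    (x y : α) : |F x - F y| ≤ 2 * ω + |u x - u y| := by
  calc |F x - F y| = |(F x - u x) + (u x - u y) - (F y - u y)| := by ring_nf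
    _ ≤ |F x - u x| + |u x - u y| + |F y - u y| :=
        (abs_sub _ _).trans (add_le_add_left (abs_add_le _ _) _)
    _ ≤ 2 * ω + |u x - u y| := by linarith [hF x, hF y]

section Holder

variable {γ : ℝ} {u : Euc d → ℝ}

lemma nonempty_holderConsts (hu : ∃ M, ∀ x y : Euc d, |u x - u y| ≤ M * ‖x - y‖ ^ γ) :
    {M : ℝ | 0 ≤ M ∧ ∀ x y : Euc d, |u x - u y| ≤ M * ‖x - y‖ ^ γ}.Nonempty := by
  obtain ⟨M, hM⟩ := hu
  exact ⟨max M 0, le_max_right _ _, fun x y =>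
    (hM x y).trans (mul_le_mul_of_nonneg_right (le_max_left _ _) (by positivity))⟩

lemma holderSemi_nonneg (hu : ∃ M, ∀ x y : Euc d, |u x - u y| ≤ M * ‖x - y‖ ^ γ) :
    0 ≤ holderSemi γ u :=
  le_csInf (nonempty_holderConsts hu) fun _ hM => hM.1

lemma holderSemi_le {M : ℝ} (hM0 : 0 ≤ M) (hM : ∀ x y : Euc d, |u x - u y| ≤ M * ‖x - y‖ ^ γ) :
    holderSemi γ u ≤ M :=
  csInf_le ⟨0, fun _ hM => hM.1⟩ ⟨hM0, hM⟩

lemma abs_sub_le_holderSemi_mul (hγ : 0 < γ)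
    (hu : ∃ M, ∀ x y : Euc d, |u x - u y| ≤ M * ‖x - y‖ ^ γ) (x y : Euc d) :
    |u x - u y| ≤ holderSemi γ u * ‖x - y‖ ^ γ := by
  rcases eq_or_ne x y with rfl | hxy
  · simp [Real.zero_rpow hγ.ne']
  have hpos : 0 < ‖x - y‖ ^ γ := Real.rpow_pos_of_pos (norm_pos_iff.2 (sub_ne_zero.2 hxy)) γ
  rw [← div_le_iff₀ hpos]
  exact le_csInf (nonempty_holderConsts hu) fun M hM => (div_le_iff₀ hpos).2 (hM.2 x y)

lemma abs_le_supNorm (hu : ∃ M, ∀ x : Euc d, |u x| ≤ M) (x : Euc d) : |u x| ≤ supNorm u := by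
  obtain ⟨M, hM⟩ := hu
  exact le_ciSup ⟨M, by rintro _ ⟨z, rfl⟩; exact hM z⟩ x

lemma supNorm_nonneg (hu : ∃ M, ∀ x : Euc d, |u x| ≤ M) : 0 ≤ supNorm u :=
  (abs_nonneg _).trans (abs_le_supNorm hu 0)

lemma norm_fderiv_le_gradSup (hu : ∃ M, ∀ x : Euc d, ‖fderiv ℝ u x‖ ≤ M) (x : Euc d) :
    ‖fderiv ℝ u x‖ ≤ gradSup u := by
  obtain ⟨M, hM⟩ := hu
  exact le_ciSup ⟨M, by rintro _ ⟨z, rfl⟩; exact hM z⟩ x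

lemma gradSup_nonneg (hu : ∃ M, ∀ x : Euc d, ‖fderiv ℝ u x‖ ≤ M) : 0 ≤ gradSup u :=
  (norm_nonneg _).trans (norm_fderiv_le_gradSup hu 0)

lemma abs_sub_le_gradSup_mul (hu : ContDiff ℝ 1 u) (hdu : ∃ M, ∀ x : Euc d, ‖fderiv ℝ u x‖ ≤ M)
    (x y : Euc d) : |u x - u y| ≤ gradSup u * dist x y := by
  rw [dist_eq_norm, ← Real.norm_eq_abs]
  exact convex_univ.norm_image_sub_le_of_norm_fderiv_le
    (fun z _ => (hu.differentiable one_ne_zero).differentiableAt)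
    (fun z _ => norm_fderiv_le_gradSup hdu z) (mem_univ y) (mem_univ x)

lemma isHolderB_and_holderNorm_le {a b : ℝ} (hb : 0 ≤ b) (hsup : ∀ x, |u x| ≤ a)
    (hsemi : ∀ x y : Euc d, |u x - u y| ≤ b * ‖x - y‖ ^ γ) :
    IsHolderB γ u ∧ holderNorm γ u ≤ a + b :=
  ⟨⟨⟨a, hsup⟩, b, hsemi⟩, add_le_add (ciSup_le hsup) (holderSemi_le hb hsemi)⟩

end Holder

namespace IsUniformNet

variable {h lam K γ : ℝ} {G : Set (Euc d)} {u : Euc d → ℝ}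

theorem holderNorm_netExtension_le (hG : IsUniformNet h lam K G) (hγ0 : 0 < γ) (hγ1 : γ ≤ 1)
    (hu : IsHolderB γ u) :
    IsHolderB γ (netExtension G h lam fun p => u p) ∧
      holderNorm γ (netExtension G h lam fun p => u p)
        ≤ (36 * K ^ 2 / lam + 10) * holderNorm γ u := by
  obtain ⟨hub, hHu⟩ := hu
  set F := netExtension G h lam fun p => u p
  set H := holderSemi γ u
  set ω := H * (3 * h) ^ γ
  have hh := hG.pos
  have hl := hG.lam_pos
  have hH : 0 ≤ H := holderSemi_nonneg hHu
  have hMu := supNorm_nonneg hub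
  have hω : 0 ≤ ω := by positivity
  have hu_holder (x y : Euc d) : |u x - u y| ≤ H * dist x y ^ γ := by
    rw [dist_eq_norm]; exact abs_sub_le_holderSemi_mul hγ0 hHu x y
  have hosc (x : Euc d) (p : G) (hp : dist x p ≤ 3 * h) : |u p - u x| ≤ ω := by
    refine (hu_holder p x).trans (mul_le_mul_of_nonneg_left ?_ hH)
    exact Real.rpow_le_rpow dist_nonneg (dist_comm x p ▸ hp) hγ0.le
  have hωh : ω / h ^ γ ≤ 3 * H := by
    have : ω / h ^ γ = (3 : ℝ) ^ γ * H := by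
      simp only [ω, Real.mul_rpow (by norm_num : (0 : ℝ) ≤ 3) hh.le]
      field_simp [(Real.rpow_pos_of_pos hh γ).ne']
    rw [this]
    exact mul_le_mul_of_nonneg_right (Real.rpow_le_self_of_one_le (by norm_num) hγ1) hH
  have hF (x : Euc d) : |F x - u x| ≤ ω := hG.abs_netExtension_sub_le (hosc x)
  have hsemi (x y : Euc d) : |F x - F y| ≤ (36 * K ^ 2 / lam + 7) * H * ‖x - y‖ ^ γ := by
    rw [← dist_eq_norm x y]
    refine (le_mul_rpow_of_two_scale (D := dist x y) (L := 12 * K ^ 2 / lam * ω) (c := 2 * ω)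
      (M := H) hγ0.le hγ1 hh dist_nonneg (by positivity) (by positivity) hH (fun hD => ?_)
      (fun _ => ?_)).trans ?_
    · refine (hG.abs_netExtension_sub_netExtension_le hω hD (hosc x)).trans (le_of_eq ?_)
      field_simp
    · exact (abs_sub_le_two_mul_add_abs_sub hF x y).trans (by linarith [hu_holder x y])
    · gcongr
      calc (12 * K ^ 2 / lam * ω + 2 * ω) / h ^ γ + H
            = (12 * K ^ 2 / lam + 2) * (ω / h ^ γ) + H := by ring
        _ ≤ (12 * K ^ 2 / lam + 2) * (3 * H) + H := by gcongr
        _ = (36 * K ^ 2 / lam + 7) * H := by ring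
  refine (isHolderB_and_holderNorm_le (by positivity)
    (fun x => hG.abs_netExtension_le (fun p => abs_le_supNorm hub p) x) hsemi).imp_right
    fun hle => hle.trans ?_
  have : 0 ≤ 36 * K ^ 2 / lam := by positivity
  change _ ≤ _ * (supNorm u + H)
  nlinarith

theorem holderNorm_netExtension_sub_le (hG : IsUniformNet h lam K G) (hγ0 : 0 < γ) (hγ1 : γ ≤ 1)
    (hh1 : h ≤ 1) (hu : ContDiff ℝ 1 u) (hub : ∃ M, ∀ x, |u x| ≤ M)
    (hdu : ∃ M, ∀ x, ‖fderiv ℝ u x‖ ≤ M) :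
    IsHolderB γ (fun x => netExtension G h lam (fun p => u p) x - u x) ∧
      holderNorm γ (fun x => netExtension G h lam (fun p => u p) x - u x)
        ≤ (36 * K ^ 2 / lam + 10) * h ^ (1 - γ) * (supNorm u + gradSup u) := by
  set F := netExtension G h lam fun p => u p
  set L := gradSup u
  set ω := L * (3 * h)
  have hh := hG.pos
  have hl := hG.lam_pos
  have hL : 0 ≤ L := gradSup_nonneg hdu
  have hMu := supNorm_nonneg hub
  have hω : 0 ≤ ω := by positivity
  have hlip := abs_sub_le_gradSup_mul hu hdu
  have hosc (x : Euc d) (p : G) (hp : dist x p ≤ 3 * h) : |u p - u x| ≤ ω :=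
    (hlip p x).trans (mul_le_mul_of_nonneg_left (dist_comm x p ▸ hp) hL)
  have hF (x : Euc d) : |F x - u x| ≤ ω := hG.abs_netExtension_sub_le (hosc x)
  have hhγ : h / h ^ γ = h ^ (1 - γ) := by rw [Real.rpow_sub hh, Real.rpow_one]
  have hsemi (x y : Euc d) :
      |(F x - u x) - (F y - u y)| ≤ (36 * K ^ 2 / lam + 7) * L * h ^ (1 - γ) * ‖x - y‖ ^ γ := by
    rw [← dist_eq_norm x y]
    refine (le_mul_rpow_of_two_scale (D := dist x y) (L := (36 * K ^ 2 / lam + 1) * L * h)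
      (c := 2 * ω) (M := 0) hγ0.le hγ1 hh dist_nonneg (by positivity) (by positivity) le_rfl
      (fun hD => ?_) (fun _ => ?_)).trans (le_of_eq ?_)
    · calc _ ≤ |F x - F y| + |u x - u y| := by rw [sub_sub_sub_comm]; exact abs_sub _ _
        _ ≤ 12 * K ^ 2 / (lam * h) * ω * dist x y + L * dist x y :=
          add_le_add (hG.abs_netExtension_sub_netExtension_le hω hD (hosc x)) (hlip x y)
        _ = (36 * K ^ 2 / lam + 1) * L * h * (dist x y / h) := by field_simp; ring
    · linarith [abs_sub (F x - u x) (F y - u y), hF x, hF y]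
    · rw [← hhγ]
      ring
  have hhγ1 : h ≤ h ^ (1 - γ) := Real.self_le_rpow_of_le_one hh.le hh1 (by linarith)
  refine (isHolderB_and_holderNorm_le (a := 3 * L * h ^ (1 - γ)) (by positivity)
    (fun x => (hF x).trans ?_) hsemi).imp_right fun hle => hle.trans ?_
  · linarith [mul_le_mul_of_nonneg_left hhγ1 (by positivity : 0 ≤ 3 * L)]
  · nlinarith [mul_nonneg (by positivity : 0 ≤ (36 * K ^ 2 / lam + 10) * h ^ (1 - γ)) hMu]

end IsUniformNet

theorem monotone_holder_extension_general (d : ℕ) :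
    ∃ h₀ : ℝ, 0 < h₀ ∧
      ∀ γ lam : ℝ, γ ∈ Set.Ioo (0 : ℝ) 1 → lam ∈ Set.Ioc (0 : ℝ) 1 →
      ∃ C : ℝ, 0 < C ∧
        ∀ h : ℝ, h ∈ Set.Ioc (0 : ℝ) h₀ →
        ∀ G : Set (Euc d), IsNet h lam G →
        ∃ Ext : (G → ℝ) → (Euc d → ℝ),
          (∀ g₁ g₂ : G → ℝ, BddFun g₁ → BddFun g₂ → ∀ x,
            Ext (fun p => g₁ p + g₂ p) x = Ext g₁ x + Ext g₂ x) ∧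
          (∀ (c : ℝ) (g : G → ℝ), BddFun g → ∀ x,
            Ext (fun p => c * g p) x = c * Ext g x) ∧
          (∀ g₁ g₂ : G → ℝ, BddFun g₁ → BddFun g₂ → (∀ p, g₁ p ≤ g₂ p) →
            ∀ x, Ext g₁ x ≤ Ext g₂ x) ∧
          (∀ g : G → ℝ, BddFun g → IsCb (Ext g)) ∧
          (∀ g : G → ℝ, BddFun g → ∀ p : G, Ext g p.1 = g p) ∧
          (∀ u : Euc d → ℝ, IsHolderB γ u →
            IsHolderB γ (Ext (fun p => u p.1)) ∧
            holderNorm γ (Ext (fun p => u p.1)) ≤ C * holderNorm γ u) ∧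
          (∀ u : Euc d → ℝ, ContDiff ℝ 1 u →
            (∃ M : ℝ, ∀ x, |u x| ≤ M ∧ ‖fderiv ℝ u x‖ ≤ M) →
            IsHolderB γ (fun x => Ext (fun p => u p.1) x - u x) ∧
            holderNorm γ (fun x => Ext (fun p => u p.1) x - u x) ≤
              C * h ^ ((1 : ℝ) - γ) * (supNorm u + gradSup u)) := by
  refine ⟨1, one_pos, fun γ lam hγ hlam => ⟨36 * ((7 / lam) ^ d) ^ 2 / lam + 10,
    by have := hlam.1; positivity, fun h hh G hG => ?_⟩⟩
  have hU := hG.isUniformNet hh.1 hlam.1 hlam.2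
  exact ⟨netExtension G h lam,
    fun g₁ g₂ _ _ => hU.netExtension_add g₁ g₂,
    fun c g _ => netExtension_const_mul G h lam c g,
    fun _ _ _ _ hg => hU.netExtension_mono hg,
    fun g ⟨M, hM⟩ => ⟨hU.continuous_netExtension g, M, hU.abs_netExtension_le hM⟩,
    fun g _ => hU.netExtension_apply_coe g,
    fun _ hu => hU.holderNorm_netExtension_le hγ.1 hγ.2.le hu,
    fun _ hu ⟨M, hM⟩ => hU.holderNorm_netExtension_sub_le hγ.1 hγ.2.le hh.2 hu
      ⟨M, fun x => (hM x).1⟩ ⟨M, fun x => (hM x).2⟩⟩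

/-- monotone linear Hölder extension from an `(h,λ)`-net `G`: an
extension operator which is linear, order preserving, the identity on `G`, bounded on
`C^{0,γ}` uniformly in the net, and approximating bounded `C¹` functions to order
`h^{1-γ}` in the `C^{0,γ}` norm. -/
theorem monotone_holder_extension (d : ℕ) (hd : 1 ≤ d) :
    ∃ h₀ : ℝ, 0 < h₀ ∧
      ∀ γ lam : ℝ, γ ∈ Set.Ioo (0 : ℝ) 1 → lam ∈ Set.Ioc (0 : ℝ) 1 →
      ∃ C : ℝ, 0 < C ∧
        ∀ h : ℝ, h ∈ Set.Ioc (0 : ℝ) h₀ →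
        ∀ G : Set (Euc d), IsNet h lam G →
        ∃ Ext : (G → ℝ) → (Euc d → ℝ),
          (∀ g₁ g₂ : G → ℝ, BddFun g₁ → BddFun g₂ → ∀ x,
            Ext (fun p => g₁ p + g₂ p) x = Ext g₁ x + Ext g₂ x) ∧
          (∀ (c : ℝ) (g : G → ℝ), BddFun g → ∀ x,
            Ext (fun p => c * g p) x = c * Ext g x) ∧
          (∀ g₁ g₂ : G → ℝ, BddFun g₁ → BddFun g₂ → (∀ p, g₁ p ≤ g₂ p) →
            ∀ x, Ext g₁ x ≤ Ext g₂ x) ∧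
          (∀ g : G → ℝ, BddFun g → IsCb (Ext g)) ∧
          (∀ g : G → ℝ, BddFun g → ∀ p : G, Ext g p.1 = g p) ∧
          (∀ u : Euc d → ℝ, IsHolderB γ u →
            IsHolderB γ (Ext (fun p => u p.1)) ∧
            holderNorm γ (Ext (fun p => u p.1)) ≤ C * holderNorm γ u) ∧
          (∀ u : Euc d → ℝ, ContDiff ℝ 1 u →
            (∃ M : ℝ, ∀ x, |u x| ≤ M ∧ ‖fderiv ℝ u x‖ ≤ M) →
            IsHolderB γ (fun x => Ext (fun p => u p.1) x - u x) ∧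
            holderNorm γ (fun x => Ext (fun p => u p.1) x - u x) ≤
              C * h ^ ((1 : ℝ) - γ) * (supNorm u + gradSup u)) :=
  monotone_holder_extension_general d

end
end

section
/- Let E be a real normed vector space, X a nonempty set, and ℒ a nonempty family of bounded linear operators from E to the space ℓ^∞(X) of bounded real-valued functions on X, with sup_{L ∈ ℒ} ‖L‖ < ∞. Define the extremal operators M⁺(φ)(x) = sup_{L ∈ ℒ} L(φ)(x) and M⁻(φ)(x) = inf_{L ∈ ℒ} L(φ)(x). Suppose I : E → ℓ^∞(X) satisfies the extremal inequalities M⁻(u − v)(x) ≤ I(u)(x) − I(v)(x) ≤ M⁺(u − v)(x) for all u, v ∈ E and x ∈ X. If I is Fréchet differentiable at some u ∈ E with derivative DI_u (a bounded linear map from E to ℓ^∞(X)), then for every φ ∈ E and every x ∈ X: M⁻(φ)(x) ≤ DI_u(φ)(x) ≤ M⁺(φ)(x). -/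
/-!
Along the ray `t ↦ u + t • φ`, the extremal inequalities and the positive homogeneity of `M±`
squeeze the difference quotient of `I(·)(x)` between `M⁻(φ)(x)` and `M⁺(φ)(x)` for every `t > 0`;
Fréchet differentiability makes these quotients converge to `DI_u(φ)(x)` as `t → 0⁺`.
-/

open Filter Topology Asymptotics Set Pointwise

section

variable {E X : Type*}

theorem setOf_apply_smul_eq_smul [AddCommGroup E] [Module ℝ E] (ℒ : Set (E →ₗ[ℝ] (X → ℝ)))
    (t : ℝ) (φ : E) (x : X) :
    {r : ℝ | ∃ L ∈ ℒ, r = L (t • φ) x} = t • {r : ℝ | ∃ L ∈ ℒ, r = L φ x} := by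
  ext r
  simp only [mem_ofPred_eq, mem_smul_set, map_smul, Pi.smul_apply, smul_eq_mul]
  constructor
  · rintro ⟨L, hL, rfl⟩
    exact ⟨L φ x, ⟨L, hL, rfl⟩, rfl⟩
  · rintro ⟨_, ⟨L, hL, rfl⟩, rfl⟩
    exact ⟨L, hL, rfl⟩

theorem hasDerivAt_comp_add_smul [NormedAddCommGroup E] [NormedSpace ℝ E]
    {F : E → ℝ} {ℓ : E →ₗ[ℝ] ℝ} {u : E}
    (hF : (fun φ ↦ F (u + φ) - F u - ℓ φ) =o[𝓝 0] id) (φ : E) :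
    HasDerivAt (fun t : ℝ ↦ F (u + t • φ)) (ℓ φ) 0 := by
  have hline : Tendsto (fun t : ℝ ↦ t • φ) (𝓝 0) (𝓝 0) := by
    simpa using (tendsto_id (x := 𝓝 (0 : ℝ))).smul_const φ
  have hbigO : (fun t : ℝ ↦ t • φ) =O[𝓝 0] fun t ↦ t :=
    isBigO_of_le' (c := ‖φ‖) _ fun t ↦ by rw [norm_smul, mul_comm]
  rw [hasDerivAt_iff_isLittleO_nhds_zero]
  simpa [Function.comp_def, map_smul, smul_eq_mul, mul_comm] using
    (hF.comp_tendsto hline).trans_isBigO hbigO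

theorem isLittleO_of_forall_exists_norm_lt [NormedAddCommGroup E]
    {f : E → ℝ} (hf : ∀ ε > (0 : ℝ), ∃ δ > (0 : ℝ), ∀ φ : E, ‖φ‖ < δ → |f φ| ≤ ε * ‖φ‖) :
    f =o[𝓝 0] id := by
  refine isLittleO_iff.2 fun ε hε ↦ ?_
  obtain ⟨δ, hδ, hf⟩ := hf ε hε
  filter_upwards [Metric.ball_mem_nhds 0 hδ] with φ hφ
  exact hf φ (mem_ball_zero_iff.1 hφ)

theorem HasDerivAt.le_of_forall_pos_mul_le {g : ℝ → ℝ} {d a x : ℝ} (hg : HasDerivAt g d x)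
    (h : ∀ t > 0, a * t ≤ g (x + t) - g x) : a ≤ d :=
  ge_of_tendsto hg.tendsto_slope_zero_right <|
    eventually_nhdsWithin_of_forall fun t (ht : 0 < t) ↦ by
      rw [smul_eq_mul, le_inv_mul_iff₀ ht, mul_comm]
      exact h t ht

theorem HasDerivAt.le_of_forall_pos_le_mul {g : ℝ → ℝ} {d b x : ℝ} (hg : HasDerivAt g d x)
    (h : ∀ t > 0, g (x + t) - g x ≤ b * t) : d ≤ b :=
  le_of_tendsto hg.tendsto_slope_zero_right <|
    eventually_nhdsWithin_of_forall fun t (ht : 0 < t) ↦ by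
      rw [smul_eq_mul, inv_mul_le_iff₀ ht, mul_comm]
      exact h t ht
end

theorem extremal_bounds_frechet_derivative_general
    (E : Type*) [NormedAddCommGroup E] [NormedSpace ℝ E]
    (X : Type*)
    (ℒ : Set (E →ₗ[ℝ] (X → ℝ)))
    (I : E → X → ℝ)
    (hExt : ∀ (u v : E) (x : X),
      sInf {r : ℝ | ∃ L ∈ ℒ, r = L (u - v) x} ≤ I u x - I v x ∧
      I u x - I v x ≤ sSup {r : ℝ | ∃ L ∈ ℒ, r = L (u - v) x})
    (u : E) (DI : E →ₗ[ℝ] (X → ℝ))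
    (hdiff : ∀ ε > (0 : ℝ), ∃ δ > (0 : ℝ), ∀ φ : E, ‖φ‖ < δ → ∀ x : X,
      |I (u + φ) x - I u x - DI φ x| ≤ ε * ‖φ‖) :
    ∀ (φ : E) (x : X),
      sInf {r : ℝ | ∃ L ∈ ℒ, r = L φ x} ≤ DI φ x ∧
      DI φ x ≤ sSup {r : ℝ | ∃ L ∈ ℒ, r = L φ x} := by
  intro φ x
  have hderiv : HasDerivAt (fun t : ℝ ↦ I (u + t • φ) x) (DI φ x) 0 :=
    hasDerivAt_comp_add_smul (F := fun v ↦ I v x) (ℓ := (LinearMap.proj x).comp DI)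
      (isLittleO_of_forall_exists_norm_lt fun ε hε ↦
        (hdiff ε hε).imp fun _ ⟨hδ, h⟩ ↦ ⟨hδ, fun φ hφ ↦ h φ hφ x⟩) φ
  have hray : ∀ t > (0 : ℝ),
      t * sInf {r : ℝ | ∃ L ∈ ℒ, r = L φ x} ≤ I (u + t • φ) x - I u x ∧
      I (u + t • φ) x - I u x ≤ t * sSup {r : ℝ | ∃ L ∈ ℒ, r = L φ x} := fun t ht ↦ by
    have := hExt (u + t • φ) u x
    rwa [add_sub_cancel_left, setOf_apply_smul_eq_smul, Real.sInf_smul_of_nonneg ht.le,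
      Real.sSup_smul_of_nonneg ht.le] at this
  exact ⟨hderiv.le_of_forall_pos_mul_le fun t ht ↦ by simpa [mul_comm] using (hray t ht).1,
    hderiv.le_of_forall_pos_le_mul fun t ht ↦ by simpa [mul_comm] using (hray t ht).2⟩

/-- if `I : E → ℓ^∞(X)` satisfies the extremal inequalities
`M⁻(u-v)(x) ≤ I(u)(x) - I(v)(x) ≤ M⁺(u-v)(x)` for a uniformly bounded nonempty family
`ℒ` of bounded linear operators into `ℓ^∞(X)`, and `I` is Fréchet differentiable at `u`
(with respect to the sup norm on `ℓ^∞(X)`) with derivative `DI`, then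
`M⁻(φ)(x) ≤ DI(φ)(x) ≤ M⁺(φ)(x)` for all `φ ∈ E` and `x ∈ X`. -/
theorem extremal_bounds_frechet_derivative
    (E : Type*) [NormedAddCommGroup E] [NormedSpace ℝ E]
    (X : Type*) [Nonempty X]
    (ℒ : Set (E →ₗ[ℝ] (X → ℝ))) (hne : ℒ.Nonempty)
    (Λ : ℝ) (hΛ : ∀ L ∈ ℒ, ∀ (φ : E) (x : X), |L φ x| ≤ Λ * ‖φ‖)
    (I : E → X → ℝ)
    (hExt : ∀ (u v : E) (x : X),
      sInf {r : ℝ | ∃ L ∈ ℒ, r = L (u - v) x} ≤ I u x - I v x ∧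
      I u x - I v x ≤ sSup {r : ℝ | ∃ L ∈ ℒ, r = L (u - v) x})
    (u : E) (DI : E →ₗ[ℝ] (X → ℝ))
    (hDIbdd : ∃ K : ℝ, ∀ (φ : E) (x : X), |DI φ x| ≤ K * ‖φ‖)
    (hdiff : ∀ ε > (0 : ℝ), ∃ δ > (0 : ℝ), ∀ φ : E, ‖φ‖ < δ → ∀ x : X,
      |I (u + φ) x - I u x - DI φ x| ≤ ε * ‖φ‖) :
    ∀ (φ : E) (x : X),
      sInf {r : ℝ | ∃ L ∈ ℒ, r = L φ x} ≤ DI φ x ∧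
      DI φ x ≤ sSup {r : ℝ | ∃ L ∈ ℒ, r = L φ x} :=
  extremal_bounds_frechet_derivative_general E X ℒ I hExt u DI hdiff
end
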